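/- arXiv:1711.06619 — 6 statements merged into one kernel-verified Lean document; each statement's English description precedes it below -/
import Mathlib

section
/- Let N ≥ 1 and k be integers, p a prime, and α : ℤ³ → ℂ a function with α(n,r,m) = 0 unless n ≥ 0, m ≥ 0 and 4nmN − r² ≥ 0. Then the following are equivalent. (ii): for all n,r,m ∈ ℤ one has α(n,r,pm) + p^{k−1}·[p∣r and p∣m]·α(n,r/p,m/p) = α(pn,r,m) + p^{k−1}·[p∣n and p∣r]·α(n/p,r/p,m), where a term with a bracketed divisibility condition is interpreted as 0 when the condition fails. (iii): for all integers ν,ρ,μ ≥ 0 and all n,r,m ∈ ℤ not divisible by p: α(p^ν n, p^ρ r, p^μ m) = Σ_{δ=0}^{min(ν,ρ,μ)} p^{δ(k−1)} α(p^{ν+μ−2δ} n, p^{ρ−δ} r, m); α(p^ν n, 0, p^μ m) = Σ_{δ=0}^{min(ν,μ)} p^{δ(k−1)} α(p^{ν+μ−2δ} n, 0, m); α(p^ν n, 0, 0) = σ_{k−1}(p^ν)·α(n,0,0); and α(0,0,p^μ m) = σ_{k−1}(p^μ)·α(0,0,m). -/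
open scoped Classical
open Complex Matrix Finset

noncomputable section

/-- The Siegel upper half-space of degree 2, in coordinates `(τ, z, τ′)`. -/
def H2 : Set (ℂ × ℂ × ℂ) :=
  {w | 0 < w.1.im ∧ 0 < w.2.2.im ∧ w.2.1.im ^ 2 < w.1.im * w.2.2.im}

/-- The symmetric 2×2 matrix `[[τ, z],[z, τ′]]` attached to `(τ, z, τ′)`. -/
def matOf (w : ℂ × ℂ × ℂ) : Matrix (Fin 2) (Fin 2) ℂ :=
  !![w.1, w.2.1; w.2.1, w.2.2]

/-- The triple `(Z 0 0, Z 0 1, Z 1 1)` attached to a symmetric 2×2 matrix. -/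
def tripleOf (Z : Matrix (Fin 2) (Fin 2) ℂ) : ℂ × ℂ × ℂ :=
  (Z 0 0, Z 0 1, Z 1 1)

/-- The 2×2 block at block-position `(a, b)` of a 4×4 real matrix. -/
def blk (M : Matrix (Fin 4) (Fin 4) ℝ) (a b : Fin 2) : Matrix (Fin 2) (Fin 2) ℝ :=
  Matrix.of fun i j => M ⟨2 * a.1 + i.1, by omega⟩ ⟨2 * b.1 + j.1, by omega⟩

def J4 : Matrix (Fin 4) (Fin 4) ℝ := !![0,0,-1,0; 0,0,0,-1; 1,0,0,0; 0,1,0,0]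

/-- Membership in `Sp₄(ℝ)`. -/
def IsSymplectic (M : Matrix (Fin 4) (Fin 4) ℝ) : Prop := Mᵀ * J4 * M = J4

def ZIntegral (x : ℝ) : Prop := ∃ n : ℤ, x = n

/-- The paramodular group `Σ_N` of degree 2 and level `N`, realized in `Sp₄(ℝ)`. -/
def ParamodularGroup (N : ℤ) : Set (Matrix (Fin 4) (Fin 4) ℝ) :=
  {M | IsSymplectic M ∧
    (∀ i j : Fin 4, (i, j) ≠ ((1 : Fin 4), (3 : Fin 4)) → ZIntegral (M i j)) ∧
    (∃ n : ℤ, M 1 3 = n / N) ∧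
    (∃ n : ℤ, M 0 1 = N * n) ∧ (∃ n : ℤ, M 2 1 = N * n) ∧
    (∃ n : ℤ, M 3 0 = N * n) ∧ (∃ n : ℤ, M 3 1 = N * n) ∧ (∃ n : ℤ, M 3 2 = N * n)}

/-- The Jacobi subgroup `Σ_N^J` of the paramodular group. -/
def JacobiGroup (N : ℤ) : Set (Matrix (Fin 4) (Fin 4) ℝ) :=
  {M | M ∈ ParamodularGroup N ∧
    (M 1 1 = 1 ∨ M 1 1 = -1) ∧ M 0 1 = 0 ∧ M 2 1 = 0 ∧ M 3 1 = 0 ∧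
    (M 3 3 = 1 ∨ M 3 3 = -1) ∧ M 3 0 = 0 ∧ M 3 2 = 0}

/-- The translation subgroup `Γ_N` of the Jacobi group. -/
def TransGroup (N : ℤ) : Set (Matrix (Fin 4) (Fin 4) ℝ) :=
  {M | M ∈ ParamodularGroup N ∧ blk M 0 0 = 1 ∧ blk M 1 0 = 0 ∧ blk M 1 1 = 1}

/-- The subgroup `Σ_{N,∞}` of the paramodular group (vanishing lower-left block). -/
def ParamodularInfinity (N : ℤ) : Set (Matrix (Fin 4) (Fin 4) ℝ) :=
  {M | M ∈ ParamodularGroup N ∧ blk M 1 0 = 0}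

/-- The Petersson slash action `(f |_k M)(Z) = det(CZ+D)^{-k} f((AZ+B)(CZ+D)⁻¹)`. -/
def slash (k : ℤ) (M : Matrix (Fin 4) (Fin 4) ℝ) (f : ℂ × ℂ × ℂ → ℂ)
    (w : ℂ × ℂ × ℂ) : ℂ :=
  ((blk M 1 0).map Complex.ofReal * matOf w + (blk M 1 1).map Complex.ofReal).det ^ (-k) *
    f (tripleOf (((blk M 0 0).map Complex.ofReal * matOf w + (blk M 0 1).map Complex.ofReal) *
      ((blk M 1 0).map Complex.ofReal * matOf w + (blk M 1 1).map Complex.ofReal)⁻¹))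

/-- One term of the Fourier expansion of level `N`. -/
def fourierTerm (N : ℤ) (a : ℤ → ℤ → ℤ → ℂ) (w : ℂ × ℂ × ℂ) (t : ℤ × ℤ × ℤ) : ℂ :=
  a t.1 t.2.1 t.2.2 * Complex.exp (2 * Real.pi * Complex.I *
    ((t.1 : ℂ) * w.1 + (t.2.1 : ℂ) * w.2.1 + (t.2.2 : ℂ) * (N : ℂ) * w.2.2))

/-- `f` has Fourier coefficients `a` for level `N`. -/
def HasFourierCoeffs (N : ℤ) (f : ℂ × ℂ × ℂ → ℂ) (a : ℤ → ℤ → ℤ → ℂ) : Prop :=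
  (∀ n r m : ℤ, ¬(0 ≤ n ∧ 0 ≤ m ∧ r ^ 2 ≤ 4 * n * m * N) → a n r m = 0) ∧
  ∀ w ∈ H2, Summable (fun t : ℤ × ℤ × ℤ => ‖fourierTerm N a w t‖) ∧
    HasSum (fourierTerm N a w) (f w)

/-- The divisor power sum `σ_{k-1}(t) = ∑_{δ ∣ t} δ^{k-1}`. -/
def sigmaz (k : ℤ) (t : ℕ) : ℂ := ∑ δ ∈ t.divisors, (δ : ℂ) ^ (k - 1)

/-- The nonnegative gcd of three integers. -/
def gcd3 (n r m : ℤ) : ℕ := Int.gcd (Int.gcd n r) m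

/-- The Maaß relations of weight `k` for a coefficient function. -/
def MaassRelations (k : ℤ) (a : ℤ → ℤ → ℤ → ℂ) : Prop :=
  ∀ n r m : ℤ, ¬(n = 0 ∧ r = 0 ∧ m = 0) →
    a n r m = ∑ δ ∈ (gcd3 n r m).divisors,
      (δ : ℂ) ^ (k - 1) * a (n * m / (δ : ℤ) ^ 2) (r / (δ : ℤ)) 1

/-- The operator `T_p^↑`. -/
def Tup (k : ℤ) (p : ℕ) (f : ℂ × ℂ × ℂ → ℂ) (w : ℂ × ℂ × ℂ) : ℂ :=
  (((p : ℝ) ^ ((k : ℝ) / 2) : ℝ) : ℂ) * f ((p : ℂ) * w.1, (Real.sqrt p : ℂ) * w.2.1, w.2.2) +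
  (((p : ℝ) ^ (-(k : ℝ) / 2) : ℝ) : ℂ) *
    ∑ u ∈ Finset.range p, f ((w.1 + (u : ℂ)) / (p : ℂ), w.2.1 / (Real.sqrt p : ℂ), w.2.2)

/-- The operator `T_p^↓`. -/
def Tdown (N k : ℤ) (p : ℕ) (f : ℂ × ℂ × ℂ → ℂ) (w : ℂ × ℂ × ℂ) : ℂ :=
  (((p : ℝ) ^ ((k : ℝ) / 2) : ℝ) : ℂ) * f (w.1, (Real.sqrt p : ℂ) * w.2.1, (p : ℂ) * w.2.2) +
  (((p : ℝ) ^ (-(k : ℝ) / 2) : ℝ) : ℂ) *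
    ∑ u ∈ Finset.range p,
      f (w.1, w.2.1 / (Real.sqrt p : ℂ), (w.2.2 + (u : ℂ) / (N : ℂ)) / (p : ℂ))

/-- Condition (ii) of Lemma 1 on the Fourier coefficients. -/
def HeckeCondition (k : ℤ) (p : ℕ) (a : ℤ → ℤ → ℤ → ℂ) : Prop :=
  ∀ n r m : ℤ,
    a n r (p * m) + (p : ℂ) ^ (k - 1) *
      (if (p : ℤ) ∣ r ∧ (p : ℤ) ∣ m then a n (r / p) (m / p) else 0)
    = a (p * n) r m + (p : ℂ) ^ (k - 1) *
      (if (p : ℤ) ∣ n ∧ (p : ℤ) ∣ r then a (n / p) (r / p) m else 0)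

end

/-!
Write `n = p^ν n₀`, `r = p^ρ r₀`, `m = p^μ m₀` with `p ∤ n₀ r₀ m₀`. Relation (ii) at `(n, r, m)`
is then a linear recursion in the exponents that expresses the coefficients with exponent `μ + 1`
through those with exponents `μ` and `μ - 1`, so a solution is determined by its values at
`μ = 0`. The sums of (iii) solve it: after the shift `δ ↦ δ + 1` in the terms carrying the factor
`p^{k-1}`, both sides of the recursion become `X₀ + ∑_{1 ≤ δ ≤ A} X_δ + ∑_{1 ≤ δ ≤ B} X_δ`, where
`X_δ = p^{δ(k-1)} α(p^{ν+μ+1-2δ} n₀, p^{ρ-δ} r₀, m₀)`, `A = min(ν, ρ, μ+1)` and `B = min(ν+1, ρ, μ)`.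
The indices with `r = 0` give the same recursion with `ρ = ∞`, those with `n = r = 0` or
`r = m = 0` the recursion `σ(p^{μ+1}) + p^{k-1} σ(p^{μ-1}) = (1 + p^{k-1}) σ(p^μ)`, and the support
condition kills the remaining indices, where `r ≠ 0` and `n m = 0`.
-/

section Recursion

variable {R : Type*} [CommRing R] (q : R)

def maassSum3 (D : ℕ → ℕ → R) (ν ρ μ : ℕ) : R :=
  ∑ δ ∈ range (min ν (min ρ μ) + 1), q ^ δ * D (ν + μ - 2 * δ) (ρ - δ)

def maassSum2 (E : ℕ → R) (ν μ : ℕ) : R :=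
  ∑ δ ∈ range (min ν μ + 1), q ^ δ * E (ν + μ - 2 * δ)

/-- Relation (ii) at `(p^ν n₀, p^ρ r₀, p^μ m₀)` with `p ∤ n₀ r₀ m₀`, for
`G ν ρ μ = α(p^ν n₀, p^ρ r₀, p^μ m₀)` and `q = p^{k-1}`. -/
def HeckeRecursion3 (G : ℕ → ℕ → ℕ → R) : Prop :=
  ∀ ν ρ μ, G ν ρ (μ + 1) + q * (if 1 ≤ ρ ∧ 1 ≤ μ then G ν (ρ - 1) (μ - 1) else 0)
    = G (ν + 1) ρ μ + q * (if 1 ≤ ν ∧ 1 ≤ ρ then G (ν - 1) (ρ - 1) μ else 0)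

def HeckeRecursion2 (E : ℕ → ℕ → R) : Prop :=
  ∀ ν μ, E ν (μ + 1) + q * (if 1 ≤ μ then E ν (μ - 1) else 0)
    = E (ν + 1) μ + q * (if 1 ≤ ν then E (ν - 1) μ else 0)

def HeckeRecursion1 (s : ℕ → R) : Prop :=
  ∀ μ, s (μ + 1) + q * (if 1 ≤ μ then s (μ - 1) else 0) = s μ + q * s μ

theorem heckeRecursion3_maassSum3 (D : ℕ → ℕ → R) : HeckeRecursion3 q (maassSum3 q D) := by
  intro ν ρ μ
  set X : ℕ → R := fun δ => q ^ δ * D (ν + μ + 1 - 2 * δ) (ρ - δ)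
  have unshifted (ν' μ' : ℕ) (h : ν' + μ' = ν + μ + 1) :
      maassSum3 q D ν' ρ μ' = ∑ δ ∈ range (min ν' (min ρ μ') + 1), X δ :=
    sum_congr rfl fun δ _ => by rw [h]
  have shifted (ν' ρ' μ' : ℕ) (hν : ν' + μ' + 2 = ν + μ + 1) (hρ : ρ' + 1 = ρ) :
      q * maassSum3 q D ν' ρ' μ' = ∑ δ ∈ range (min ν' (min ρ' μ') + 2), X δ - X 0 := by
    rw [sum_range_succ', add_sub_cancel_right, maassSum3, mul_sum]
    refine sum_congr rfl fun δ _ => ?_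
    simp only [X]
    rw [show ν + μ + 1 - 2 * (δ + 1) = ν' + μ' - 2 * δ by omega,
      show ρ - (δ + 1) = ρ' - δ by omega, pow_succ', mul_assoc]
  have hA : q * (if 1 ≤ ν ∧ 1 ≤ ρ then maassSum3 q D (ν - 1) (ρ - 1) μ else 0)
      = ∑ δ ∈ range (min ν (min ρ (μ + 1)) + 1), X δ - X 0 := by
    split_ifs with h
    · rw [shifted _ _ _ (by omega) (by omega), show min ν (min ρ (μ + 1)) + 1
        = min (ν - 1) (min (ρ - 1) μ) + 2 by omega]
    · rw [show min ν (min ρ (μ + 1)) = 0 by omega]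
      simp
  have hB : q * (if 1 ≤ ρ ∧ 1 ≤ μ then maassSum3 q D ν (ρ - 1) (μ - 1) else 0)
      = ∑ δ ∈ range (min (ν + 1) (min ρ μ) + 1), X δ - X 0 := by
    split_ifs with h
    · rw [shifted _ _ _ (by omega) (by omega), show min (ν + 1) (min ρ μ) + 1
        = min ν (min (ρ - 1) (μ - 1)) + 2 by omega]
    · rw [show min (ν + 1) (min ρ μ) = 0 by omega]
      simp
  rw [unshifted ν (μ + 1) (by omega), unshifted (ν + 1) μ (by omega), hA, hB]
  ring

theorem HeckeRecursion3.eq_maassSum3 {G : ℕ → ℕ → ℕ → R} (h : HeckeRecursion3 q G)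
    (ν ρ μ : ℕ) : G ν ρ μ = maassSum3 q (fun x y => G x y 0) ν ρ μ := by
  induction μ using Nat.strong_induction_on generalizing ν ρ with
  | _ μ ih =>
    rcases μ with _ | μ
    · simp [maassSum3]
    · have hG := h ν ρ μ
      rw [ih μ (by omega) (ν + 1), ih (μ - 1) (by omega), ih μ (by omega) (ν - 1)] at hG
      linear_combination hG - heckeRecursion3_maassSum3 q (fun x y => G x y 0) ν ρ μ

theorem heckeRecursion3_iff {G : ℕ → ℕ → ℕ → R} :
    HeckeRecursion3 q G ↔ ∀ ν ρ μ, G ν ρ μ = maassSum3 q (fun x y => G x y 0) ν ρ μ := by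
  refine ⟨fun h ν ρ μ => h.eq_maassSum3 q ν ρ μ, fun h => ?_⟩
  have hG : maassSum3 q (fun x y => G x y 0) = G :=
    funext fun ν => funext fun ρ => funext fun μ => (h ν ρ μ).symm
  exact hG ▸ heckeRecursion3_maassSum3 q _

theorem maassSum3_eq_maassSum2 (E : ℕ → R) {ν ρ μ : ℕ} (h : min ν μ ≤ ρ) :
    maassSum3 q (fun x _ => E x) ν ρ μ = maassSum2 q E ν μ := by
  simp only [maassSum3, maassSum2, show min ν (min ρ μ) = min ν μ by omega]

theorem heckeRecursion2_maassSum2 (E : ℕ → R) : HeckeRecursion2 q (maassSum2 q E) := by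
  intro ν μ
  have h := heckeRecursion3_maassSum3 q (fun x _ => E x) ν (ν + μ + 1) μ
  simpa (disch := omega) only [maassSum3_eq_maassSum2, Nat.le_add_left 1 (ν + μ), true_and,
    and_true] using h

theorem HeckeRecursion2.eq_maassSum2 {E : ℕ → ℕ → R} (h : HeckeRecursion2 q E) (ν μ : ℕ) :
    E ν μ = maassSum2 q (fun x => E x 0) ν μ := by
  induction μ using Nat.strong_induction_on generalizing ν with
  | _ μ ih =>
    rcases μ with _ | μ
    · simp [maassSum2]
    · have hE := h ν μ
      rw [ih μ (by omega) (ν + 1), ih (μ - 1) (by omega), ih μ (by omega) (ν - 1)] at hE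
      linear_combination hE - heckeRecursion2_maassSum2 q (fun x => E x 0) ν μ

theorem heckeRecursion2_iff {E : ℕ → ℕ → R} :
    HeckeRecursion2 q E ↔ ∀ ν μ, E ν μ = maassSum2 q (fun x => E x 0) ν μ := by
  refine ⟨fun h ν μ => h.eq_maassSum2 q ν μ, fun h => ?_⟩
  have hE : maassSum2 q (fun x => E x 0) = E := funext fun ν => funext fun μ => (h ν μ).symm
  exact hE ▸ heckeRecursion2_maassSum2 q _

theorem heckeRecursion1_geom_sum : HeckeRecursion1 q fun μ => ∑ i ∈ range (μ + 1), q ^ i := by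
  intro μ
  dsimp only
  have h : q * (if 1 ≤ μ then ∑ i ∈ range (μ - 1 + 1), q ^ i else 0)
      = ∑ i ∈ range (μ + 1), q ^ i - 1 := by
    split_ifs with hμ
    · rw [Nat.sub_add_cancel hμ, geom_sum_succ, add_sub_cancel_right]
    · simp [show μ = 0 by omega]
  rw [h, geom_sum_succ (n := μ + 1)]
  ring

theorem HeckeRecursion1.eq_geom_sum_mul {s : ℕ → R} (h : HeckeRecursion1 q s) (μ : ℕ) :
    s μ = (∑ i ∈ range (μ + 1), q ^ i) * s 0 := by
  induction μ using Nat.strong_induction_on with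
  | _ μ ih =>
    rcases μ with _ | μ
    · simp
    · have hs := h μ
      have hg := heckeRecursion1_geom_sum q μ
      rw [ih μ (by omega), ih (μ - 1) (by omega)] at hs
      split_ifs at hs hg <;> linear_combination hs - s 0 * hg

theorem heckeRecursion1_iff {s : ℕ → R} :
    HeckeRecursion1 q s ↔ ∀ μ, s μ = (∑ i ∈ range (μ + 1), q ^ i) * s 0 := by
  refine ⟨fun h μ => h.eq_geom_sum_mul q μ, fun h μ => ?_⟩
  have hg := heckeRecursion1_geom_sum q μ
  rw [h (μ + 1), h μ, h (μ - 1)]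
  split_ifs at hg ⊢ <;> linear_combination s 0 * hg

end Recursion

theorem dvd_pow_mul_iff_one_le {M : Type*} [CommMonoid M] {x u : M} (hu : ¬x ∣ u) (s : ℕ) :
    x ∣ x ^ s * u ↔ 1 ≤ s := by
  refine ⟨fun h => ?_, fun hs => Dvd.dvd.mul_right (dvd_pow_self x (by omega)) u⟩
  by_contra hs
  rw [show s = 0 by omega, pow_zero, one_mul] at h
  exact hu h

theorem Int.pow_mul_ediv_self {x : ℤ} (hx : x ≠ 0) (u : ℤ) {s : ℕ} (hs : 1 ≤ s) :
    x ^ s * u / x = x ^ (s - 1) * u := by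
  obtain ⟨t, rfl⟩ : ∃ t, s = t + 1 := ⟨s - 1, by omega⟩
  rw [pow_succ', mul_assoc, Int.mul_ediv_cancel_left _ hx, Nat.add_sub_cancel]

theorem Int.exists_eq_pow_mul_not_dvd {p : ℕ} (hp : p.Prime) {x : ℤ} (hx : x ≠ 0) :
    ∃ (v : ℕ) (x₀ : ℤ), ¬(p : ℤ) ∣ x₀ ∧ x = p ^ v * x₀ := by
  have hfin : FiniteMultiplicity (p : ℤ) x :=
    Int.finiteMultiplicity_iff.2 ⟨by simpa using hp.ne_one, hx⟩
  obtain ⟨x₀, hx₀, hndvd⟩ := hfin.exists_eq_pow_mul_and_not_dvd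
  exact ⟨_, x₀, hndvd, hx₀⟩

section Coefficients

variable (k : ℤ) (p : ℕ) (a : ℤ → ℤ → ℤ → ℂ)

def HeckeRelationAt (n r m : ℤ) : Prop :=
  a n r (p * m) + (p : ℂ) ^ (k - 1) *
      (if (p : ℤ) ∣ r ∧ (p : ℤ) ∣ m then a n (r / p) (m / p) else 0)
    = a (p * n) r m + (p : ℂ) ^ (k - 1) *
      (if (p : ℤ) ∣ n ∧ (p : ℤ) ∣ r then a (n / p) (r / p) m else 0)

variable {k p a}

theorem heckeRelationAt_of_eq_zero {N : ℤ}
    (hsupp : ∀ n r m : ℤ, ¬(0 ≤ n ∧ 0 ≤ m ∧ r ^ 2 ≤ 4 * n * m * N) → a n r m = 0)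
    {n r m : ℤ} (hr : r ≠ 0) (hnm : n = 0 ∨ m = 0) : HeckeRelationAt k p a n r m := by
  have hvan {x y z : ℤ} (hy : y ≠ 0) (hxz : x = 0 ∨ z = 0) : a x y z = 0 := by
    refine hsupp x y z fun ⟨_, _, h⟩ => ?_
    have : 0 < y ^ 2 := by positivity
    rcases hxz with rfl | rfl <;> simp at h <;> omega
  have hrp (hd : (p : ℤ) ∣ r) : r / p ≠ 0 := fun h0 => hr (by
    rw [← Int.ediv_mul_cancel hd, h0, zero_mul])
  unfold HeckeRelationAt
  rcases hnm with rfl | rfl <;> simp +contextual [hvan, hr, hrp]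

theorem forall_heckeRelationAt_iff_maassSum3 (hp : p ≠ 0) {n r m : ℤ}
    (hn : ¬(p : ℤ) ∣ n) (hr : ¬(p : ℤ) ∣ r) (hm : ¬(p : ℤ) ∣ m) :
    (∀ ν ρ μ : ℕ, HeckeRelationAt k p a (p ^ ν * n) (p ^ ρ * r) (p ^ μ * m)) ↔
      ∀ ν ρ μ : ℕ, a (p ^ ν * n) (p ^ ρ * r) (p ^ μ * m) =
        maassSum3 ((p : ℂ) ^ (k - 1)) (fun x y => a (p ^ x * n) (p ^ y * r) m) ν ρ μ := by
  have hp' : (p : ℤ) ≠ 0 := by exact_mod_cast hp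
  trans HeckeRecursion3 ((p : ℂ) ^ (k - 1)) fun ν ρ μ => a (p ^ ν * n) (p ^ ρ * r) (p ^ μ * m)
  · simp +contextual only [HeckeRelationAt, HeckeRecursion3, dvd_pow_mul_iff_one_le hn,
      dvd_pow_mul_iff_one_le hr, dvd_pow_mul_iff_one_le hm, Int.pow_mul_ediv_self hp',
      ← mul_assoc, ← pow_succ']
  · rw [heckeRecursion3_iff]
    simp only [pow_zero, one_mul]

theorem forall_heckeRelationAt_iff_maassSum2 (hp : p ≠ 0) {n m : ℤ}
    (hn : ¬(p : ℤ) ∣ n) (hm : ¬(p : ℤ) ∣ m) :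
    (∀ ν μ : ℕ, HeckeRelationAt k p a (p ^ ν * n) 0 (p ^ μ * m)) ↔
      ∀ ν μ : ℕ, a (p ^ ν * n) 0 (p ^ μ * m) =
        maassSum2 ((p : ℂ) ^ (k - 1)) (fun x => a (p ^ x * n) 0 m) ν μ := by
  have hp' : (p : ℤ) ≠ 0 := by exact_mod_cast hp
  trans HeckeRecursion2 ((p : ℂ) ^ (k - 1)) fun ν μ => a (p ^ ν * n) 0 (p ^ μ * m)
  · simp +contextual only [HeckeRelationAt, HeckeRecursion2, dvd_pow_mul_iff_one_le hn,
      dvd_pow_mul_iff_one_le hm, Int.pow_mul_ediv_self hp', ← mul_assoc, ← pow_succ',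
      dvd_zero, true_and, and_true, Int.zero_ediv]
  · rw [heckeRecursion2_iff]
    simp only [pow_zero, one_mul]

theorem forall_heckeRelationAt_left_iff_geom_sum (hp : p ≠ 0) {n : ℤ} (hn : ¬(p : ℤ) ∣ n) :
    (∀ ν : ℕ, HeckeRelationAt k p a (p ^ ν * n) 0 0) ↔
      ∀ ν : ℕ, a (p ^ ν * n) 0 0 = (∑ i ∈ range (ν + 1), ((p : ℂ) ^ (k - 1)) ^ i) * a n 0 0 := by
  have hp' : (p : ℤ) ≠ 0 := by exact_mod_cast hp
  trans HeckeRecursion1 ((p : ℂ) ^ (k - 1)) fun ν => a (p ^ ν * n) 0 0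
  · simp +contextual only [HeckeRelationAt, HeckeRecursion1, dvd_pow_mul_iff_one_le hn,
      Int.pow_mul_ediv_self hp', ← mul_assoc, ← pow_succ', dvd_zero, and_self, and_true,
      if_true, Int.zero_ediv, mul_zero]
    exact forall_congr' fun _ => eq_comm
  · rw [heckeRecursion1_iff]
    simp only [pow_zero, one_mul]

theorem forall_heckeRelationAt_right_iff_geom_sum (hp : p ≠ 0) {m : ℤ} (hm : ¬(p : ℤ) ∣ m) :
    (∀ μ : ℕ, HeckeRelationAt k p a 0 0 (p ^ μ * m)) ↔
      ∀ μ : ℕ, a 0 0 (p ^ μ * m) = (∑ i ∈ range (μ + 1), ((p : ℂ) ^ (k - 1)) ^ i) * a 0 0 m := by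
  have hp' : (p : ℤ) ≠ 0 := by exact_mod_cast hp
  trans HeckeRecursion1 ((p : ℂ) ^ (k - 1)) fun μ => a 0 0 (p ^ μ * m)
  · simp +contextual only [HeckeRelationAt, HeckeRecursion1, dvd_pow_mul_iff_one_le hm,
      Int.pow_mul_ediv_self hp', ← mul_assoc, ← pow_succ', dvd_zero, and_self, true_and,
      if_true, Int.zero_ediv, mul_zero]
  · rw [heckeRecursion1_iff]
    simp only [pow_zero, one_mul]

theorem heckeCondition_iff_forall_pow_mul (hp : p.Prime) {N : ℤ}
    (hsupp : ∀ n r m : ℤ, ¬(0 ≤ n ∧ 0 ≤ m ∧ r ^ 2 ≤ 4 * n * m * N) → a n r m = 0) :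
    HeckeCondition k p a ↔
      (∀ n r m : ℤ, ¬(p : ℤ) ∣ n → ¬(p : ℤ) ∣ r → ¬(p : ℤ) ∣ m →
        ∀ ν ρ μ : ℕ, HeckeRelationAt k p a (p ^ ν * n) (p ^ ρ * r) (p ^ μ * m)) ∧
      (∀ n m : ℤ, ¬(p : ℤ) ∣ n → ¬(p : ℤ) ∣ m →
        ∀ ν μ : ℕ, HeckeRelationAt k p a (p ^ ν * n) 0 (p ^ μ * m)) ∧
      (∀ n : ℤ, ¬(p : ℤ) ∣ n → ∀ ν : ℕ, HeckeRelationAt k p a (p ^ ν * n) 0 0) ∧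
      (∀ m : ℤ, ¬(p : ℤ) ∣ m → ∀ μ : ℕ, HeckeRelationAt k p a 0 0 (p ^ μ * m)) := by
  refine ⟨fun h => ⟨fun _ _ _ _ _ _ _ _ _ => h _ _ _, fun _ _ _ _ _ _ => h _ _ _,
    fun _ _ _ => h _ _ _, fun _ _ _ => h _ _ _⟩, ?_⟩
  rintro ⟨h₃, h₂, h₁, h₁'⟩ n r m
  have decomp {x : ℤ} (hx : x ≠ 0) := Int.exists_eq_pow_mul_not_dvd hp hx
  rcases eq_or_ne r 0 with rfl | hr
  · rcases eq_or_ne n 0 with rfl | hn <;> rcases eq_or_ne m 0 with rfl | hm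
    · simp
    · obtain ⟨μ, m₀, hm₀, rfl⟩ := decomp hm
      exact h₁' m₀ hm₀ μ
    · obtain ⟨ν, n₀, hn₀, rfl⟩ := decomp hn
      exact h₁ n₀ hn₀ ν
    · obtain ⟨ν, n₀, hn₀, rfl⟩ := decomp hn
      obtain ⟨μ, m₀, hm₀, rfl⟩ := decomp hm
      exact h₂ n₀ m₀ hn₀ hm₀ ν μ
  rcases eq_or_ne n 0 with rfl | hn
  · exact heckeRelationAt_of_eq_zero hsupp hr (.inl rfl)
  rcases eq_or_ne m 0 with rfl | hm
  · exact heckeRelationAt_of_eq_zero hsupp hr (.inr rfl)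
  obtain ⟨ν, n₀, hn₀, rfl⟩ := decomp hn
  obtain ⟨ρ, r₀, hr₀, rfl⟩ := decomp hr
  obtain ⟨μ, m₀, hm₀, rfl⟩ := decomp hm
  exact h₃ n₀ r₀ m₀ hn₀ hr₀ hm₀ ν ρ μ

end Coefficients

theorem sigmaz_prime_pow (k : ℤ) {p : ℕ} (hp : p.Prime) (j : ℕ) :
    sigmaz k (p ^ j) = ∑ i ∈ range (j + 1), ((p : ℂ) ^ (k - 1)) ^ i := by
  rw [sigmaz, Nat.sum_divisors_prime_pow hp]
  refine sum_congr rfl fun i _ => ?_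
  rw [Nat.cast_pow, ← zpow_natCast, ← _root_.zpow_mul, mul_comm, _root_.zpow_mul, zpow_natCast]

theorem lemma1_ii_iff_iii_general (N k : ℤ) (p : ℕ) (hp : p.Prime)
    (a : ℤ → ℤ → ℤ → ℂ)
    (hsupp : ∀ n r m : ℤ, ¬(0 ≤ n ∧ 0 ≤ m ∧ r ^ 2 ≤ 4 * n * m * N) → a n r m = 0) :
    HeckeCondition k p a ↔
    (∀ ν ρ μ : ℕ, ∀ n r m : ℤ,
      ¬((p : ℤ) ∣ n) → ¬((p : ℤ) ∣ r) → ¬((p : ℤ) ∣ m) →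
      (a ((p : ℤ) ^ ν * n) ((p : ℤ) ^ ρ * r) ((p : ℤ) ^ μ * m)
        = ∑ δ ∈ Finset.range (min ν (min ρ μ) + 1),
            (p : ℂ) ^ ((δ : ℤ) * (k - 1)) *
              a ((p : ℤ) ^ (ν + μ - 2 * δ) * n) ((p : ℤ) ^ (ρ - δ) * r) m) ∧
      (a ((p : ℤ) ^ ν * n) 0 ((p : ℤ) ^ μ * m)
        = ∑ δ ∈ Finset.range (min ν μ + 1),
            (p : ℂ) ^ ((δ : ℤ) * (k - 1)) * a ((p : ℤ) ^ (ν + μ - 2 * δ) * n) 0 m) ∧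
      (a ((p : ℤ) ^ ν * n) 0 0 = sigmaz k (p ^ ν) * a n 0 0) ∧
      (a 0 0 ((p : ℤ) ^ μ * m) = sigmaz k (p ^ μ) * a 0 0 m)) := by
  have hq (δ : ℕ) : (p : ℂ) ^ ((δ : ℤ) * (k - 1)) = ((p : ℂ) ^ (k - 1)) ^ δ := by
    rw [mul_comm, _root_.zpow_mul, zpow_natCast]
  have hp₀ := hp.ne_zero
  have hp₁ : ¬(p : ℤ) ∣ 1 := by exact_mod_cast hp.not_dvd_one
  simp only [hq, sigmaz_prime_pow k hp]
  rw [heckeCondition_iff_forall_pow_mul hp hsupp]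
  constructor
  · rintro ⟨h₃, h₂, h₁, h₁'⟩ ν ρ μ n r m hn hr hm
    exact ⟨(forall_heckeRelationAt_iff_maassSum3 hp₀ hn hr hm).1 (h₃ n r m hn hr hm) ν ρ μ,
      (forall_heckeRelationAt_iff_maassSum2 hp₀ hn hm).1 (h₂ n m hn hm) ν μ,
      (forall_heckeRelationAt_left_iff_geom_sum hp₀ hn).1 (h₁ n hn) ν,
      (forall_heckeRelationAt_right_iff_geom_sum hp₀ hm).1 (h₁' m hm) μ⟩
  · intro h
    exact ⟨fun n r m hn hr hm => (forall_heckeRelationAt_iff_maassSum3 hp₀ hn hr hm).2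
        fun ν ρ μ => (h ν ρ μ n r m hn hr hm).1,
      fun n m hn hm => (forall_heckeRelationAt_iff_maassSum2 hp₀ hn hm).2
        fun ν μ => (h ν 0 μ n 1 m hn hp₁ hm).2.1,
      fun n hn => (forall_heckeRelationAt_left_iff_geom_sum hp₀ hn).2
        fun ν => (h ν 0 0 n 1 1 hn hp₁ hp₁).2.2.1,
      fun m hm => (forall_heckeRelationAt_right_iff_geom_sum hp₀ hm).2
        fun μ => (h 0 0 μ 1 1 m hp₁ hp₁ hm).2.2.2⟩

/-- Lemma 1, (ii) ⇔ (iii): coefficient-level equivalence. -/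
theorem lemma1_ii_iff_iii (N k : ℤ) (hN : 1 ≤ N) (p : ℕ) (hp : p.Prime)
    (a : ℤ → ℤ → ℤ → ℂ)
    (hsupp : ∀ n r m : ℤ, ¬(0 ≤ n ∧ 0 ≤ m ∧ r ^ 2 ≤ 4 * n * m * N) → a n r m = 0) :
    HeckeCondition k p a ↔
    (∀ ν ρ μ : ℕ, ∀ n r m : ℤ,
      ¬((p : ℤ) ∣ n) → ¬((p : ℤ) ∣ r) → ¬((p : ℤ) ∣ m) →
      (a ((p : ℤ) ^ ν * n) ((p : ℤ) ^ ρ * r) ((p : ℤ) ^ μ * m)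
        = ∑ δ ∈ Finset.range (min ν (min ρ μ) + 1),
            (p : ℂ) ^ ((δ : ℤ) * (k - 1)) *
              a ((p : ℤ) ^ (ν + μ - 2 * δ) * n) ((p : ℤ) ^ (ρ - δ) * r) m) ∧
      (a ((p : ℤ) ^ ν * n) 0 ((p : ℤ) ^ μ * m)
        = ∑ δ ∈ Finset.range (min ν μ + 1),
            (p : ℂ) ^ ((δ : ℤ) * (k - 1)) * a ((p : ℤ) ^ (ν + μ - 2 * δ) * n) 0 m) ∧
      (a ((p : ℤ) ^ ν * n) 0 0 = sigmaz k (p ^ ν) * a n 0 0) ∧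
      (a 0 0 ((p : ℤ) ^ μ * m) = sigmaz k (p ^ μ) * a 0 0 m)) :=
  lemma1_ii_iff_iii_general N k p hp a hsupp
end

section
/- Let N ≥ 1 be an integer and p a prime. Let A := (1/√p)·diag(p,p,1,1) and, for u = 0,…,p−1, let B_u := (1/√p)·[[1,0,u,0],[0,p,0,0],[0,0,p,0],[0,0,0,1]]. Then the double coset Σ_N^J · A · Σ_N^J is the disjoint union of the p+1 right cosets Σ_N^J·A and Σ_N^J·B_u (u = 0,…,p−1). -/
open scoped Classical
open Complex Matrix Finset

/-- The matrix `A = (1/√p)·diag(p,p,1,1)`. -/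
noncomputable def Amat (p : ℕ) : Matrix (Fin 4) (Fin 4) ℝ :=
  (Real.sqrt p)⁻¹ • !![(p : ℝ), 0, 0, 0; 0, (p : ℝ), 0, 0; 0, 0, 1, 0; 0, 0, 0, 1]

/-- The matrix `B_u = (1/√p)·[[1,0,u,0],[0,p,0,0],[0,0,p,0],[0,0,0,1]]`. -/
noncomputable def Bmat (p u : ℕ) : Matrix (Fin 4) (Fin 4) ℝ :=
  (Real.sqrt p)⁻¹ •
    !![1, 0, (u : ℝ), 0; 0, (p : ℝ), 0, 0; 0, 0, (p : ℝ), 0; 0, 0, 0, 1]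

/-!
On the coordinates `0, 2` an element `g` of `Σ_N^J` is a matrix in `SL₂(ℤ)`, and conjugation by
`A` multiplies the entries of `g` by `1`, `p` or `1/p`; hence `A g A⁻¹ ∈ Σ_N^J` once `p ∣ g 2 0`.
For `g₁ A g₂`, either `p ∣ g₂ 2 0`, or `p ∣ g₂ 2 2 - u g₂ 2 0` for some `0 ≤ u < p`, and then
`g₂ = g T_u` with `p ∣ g 2 0` and `T_u ∈ SL₂(ℤ)`; since `B_u = S A T_u` with `S ∈ SL₂(ℤ)`, this
puts `g₁ A g₂` into `Σ_N^J B_u`. Conversely, `g A = g' B_u` (resp. `g B_u = g' B_v`) forces `p` to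
divide a whole column of the `SL₂(ℤ)` block of `g`, which has determinant one.
-/

namespace ZIntegral

variable {x y : ℝ}

@[simp] lemma intCast (n : ℤ) : ZIntegral n := ⟨n, rfl⟩

@[simp] lemma natCast (n : ℕ) : ZIntegral n := ⟨n, by simp⟩

@[simp] lemma zero : ZIntegral 0 := ⟨0, by simp⟩

@[simp] lemma one : ZIntegral 1 := ⟨1, by simp⟩

lemma add (hx : ZIntegral x) (hy : ZIntegral y) : ZIntegral (x + y) := by
  obtain ⟨m, rfl⟩ := hx; obtain ⟨n, rfl⟩ := hy; exact ⟨m + n, by push_cast; ring⟩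

lemma sub (hx : ZIntegral x) (hy : ZIntegral y) : ZIntegral (x - y) := by
  obtain ⟨m, rfl⟩ := hx; obtain ⟨n, rfl⟩ := hy; exact ⟨m - n, by push_cast; ring⟩

lemma mul (hx : ZIntegral x) (hy : ZIntegral y) : ZIntegral (x * y) := by
  obtain ⟨m, rfl⟩ := hx; obtain ⟨n, rfl⟩ := hy; exact ⟨m * n, by push_cast; ring⟩

lemma of_abs_eq_one (hx : |x| = 1) : ZIntegral x := by
  rcases (abs_eq zero_le_one).mp hx with rfl | rfl
  exacts [one, ⟨-1, by simp⟩]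

lemma intCast_div_of_dvd {m n : ℤ} (h : n ∣ m) : ZIntegral ((m : ℝ) / n) := by
  obtain ⟨k, rfl⟩ := h
  rcases eq_or_ne n 0 with rfl | hn
  · simp
  · exact ⟨k, by push_cast; field_simp⟩

lemma not_inv_of_one_lt (hx : 1 < x) : ¬ ZIntegral x⁻¹ := by
  rintro ⟨n, hn⟩
  have hpos : (0 : ℝ) < n := hn ▸ inv_pos.mpr (by linarith)
  have hlt : (n : ℝ) < 1 := hn ▸ inv_lt_one_of_one_lt₀ hx
  have : (0 : ℤ) < n ∧ n < 1 := ⟨by exact_mod_cast hpos, by exact_mod_cast hlt⟩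
  omega

lemma div_of_isCoprime {m n : ℤ} (hmn : IsCoprime m n) (hx : ZIntegral x)
    (hmx : ZIntegral (m * x / n)) : ZIntegral (x / n) := by
  obtain ⟨s, t, hst⟩ := hmn
  have hst' : (s : ℝ) * m + t * n = 1 := by exact_mod_cast hst
  rcases eq_or_ne (n : ℝ) 0 with hn | hn
  · simp [hn]
  have hx_eq : x / n = s * (m * x / n) + t * x := by
    rw [← one_mul (x / n), ← hst']
    field_simp
  rw [hx_eq]
  exact ((intCast s).mul hmx).add ((intCast t).mul hx)

end ZIntegral

lemma dvd_or_exists_dvd_sub_mul {p : ℕ} (hp : p.Prime) (c d : ℤ) :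
    (p : ℤ) ∣ c ∨ ∃ u < p, (p : ℤ) ∣ d - u * c := by
  have := Fact.mk hp
  refine or_iff_not_imp_left.2 fun hc => ?_
  have hc' : (c : ZMod p) ≠ 0 := by rwa [Ne, ZMod.intCast_zmod_eq_zero_iff_dvd]
  refine ⟨((d : ZMod p) / c).val, ZMod.val_lt _, ?_⟩
  rw [← ZMod.intCast_zmod_eq_zero_iff_dvd]
  push_cast
  rw [ZMod.natCast_zmod_val, div_mul_cancel₀ _ hc', sub_self]

lemma IsSymplectic.mul {M P : Matrix (Fin 4) (Fin 4) ℝ} (hM : IsSymplectic M)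
    (hP : IsSymplectic P) : IsSymplectic (M * P) := by
  unfold IsSymplectic at *
  calc (M * P)ᵀ * J4 * (M * P) = Pᵀ * (Mᵀ * J4 * M) * P := by
        simp only [transpose_mul, Matrix.mul_assoc]
    _ = J4 := by rw [hM, hP]

namespace JacobiGroup

variable {N : ℤ} {g h : Matrix (Fin 4) (Fin 4) ℝ}

lemma isSymplectic (hg : g ∈ JacobiGroup N) : IsSymplectic g := hg.1.1

lemma zIntegral (hg : g ∈ JacobiGroup N) {i j : Fin 4} (hij : (i, j) ≠ (1, 3)) :
    ZIntegral (g i j) :=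
  hg.1.2.1 i j hij

lemma exists_apply_one_three (hg : g ∈ JacobiGroup N) : ∃ n : ℤ, g 1 3 = n / N :=
  hg.1.2.2.1

lemma col_one_eq_zero (hg : g ∈ JacobiGroup N) {i : Fin 4} (hi : i ≠ 1) : g i 1 = 0 := by
  obtain ⟨-, -, h01, h21, h31, -⟩ := hg
  fin_cases i <;> simp_all

lemma row_three_eq_zero (hg : g ∈ JacobiGroup N) {j : Fin 4} (hj : j ≠ 3) : g 3 j = 0 := by
  obtain ⟨-, -, -, -, h31, -, h30, h32⟩ := hg
  fin_cases j <;> simp_all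

lemma abs_apply_one_one (hg : g ∈ JacobiGroup N) : |g 1 1| = 1 :=
  (abs_eq zero_le_one).mpr hg.2.1

lemma abs_apply_three_three (hg : g ∈ JacobiGroup N) : |g 3 3| = 1 :=
  (abs_eq zero_le_one).mpr hg.2.2.2.2.2.1

lemma mem_of_isSymplectic (hS : IsSymplectic g)
    (hint : ∀ i j, (i, j) ≠ ((1 : Fin 4), (3 : Fin 4)) → ZIntegral (g i j))
    (h13 : ∃ n : ℤ, g 1 3 = n / N) (hcol : ∀ i, i ≠ 1 → g i 1 = 0)
    (hrow : ∀ j, j ≠ 3 → g 3 j = 0) (h11 : |g 1 1| = 1) (h33 : |g 3 3| = 1) :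
    g ∈ JacobiGroup N := by
  have hmul : ∀ x : ℝ, x = 0 → ∃ n : ℤ, x = N * n := fun x hx => ⟨0, by simp [hx]⟩
  refine ⟨⟨hS, hint, h13, hmul _ (hcol 0 (by decide)), hmul _ (hcol 2 (by decide)),
    hmul _ (hrow 0 (by decide)), hmul _ (hrow 1 (by decide)), hmul _ (hrow 2 (by decide))⟩,
    (abs_eq zero_le_one).mp h11, hcol 0 (by decide), hcol 2 (by decide), hcol 3 (by decide),
    (abs_eq zero_le_one).mp h33, hrow 0 (by decide), hrow 2 (by decide)⟩

lemma minor_eq_one (hg : g ∈ JacobiGroup N) : g 0 0 * g 2 2 - g 0 2 * g 2 0 = 1 := by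
  have h02 := congrFun (congrFun (isSymplectic hg) 0) 2
  simp [Matrix.mul_apply, Fin.sum_univ_four, J4, row_three_eq_zero hg] at h02
  linarith

lemma false_of_zIntegral_div_col_zero (hg : g ∈ JacobiGroup N) {t : ℝ} (ht : 1 < t)
    (h0 : ZIntegral (g 0 0 / t)) (h2 : ZIntegral (g 2 0 / t)) : False := by
  apply ZIntegral.not_inv_of_one_lt ht
  have ht_inv : t⁻¹ = g 2 2 * (g 0 0 / t) - g 0 2 * (g 2 0 / t) := by
    rw [← one_div, ← minor_eq_one hg]
    ring
  rw [ht_inv]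
  exact ((zIntegral hg (by decide)).mul h0).sub ((zIntegral hg (by decide)).mul h2)

lemma false_of_zIntegral_div_col_two (hg : g ∈ JacobiGroup N) {t : ℝ} (ht : 1 < t)
    (h0 : ZIntegral (g 0 2 / t)) (h2 : ZIntegral (g 2 2 / t)) : False := by
  apply ZIntegral.not_inv_of_one_lt ht
  have ht_inv : t⁻¹ = g 0 0 * (g 2 2 / t) - g 2 0 * (g 0 2 / t) := by
    rw [← one_div, ← minor_eq_one hg]
    ring
  rw [ht_inv]
  exact ((zIntegral hg (by decide)).mul h2).sub ((zIntegral hg (by decide)).mul h0)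

lemma mul_apply_col_one (hh : h ∈ JacobiGroup N) (i : Fin 4) :
    (g * h) i 1 = g i 1 * h 1 1 := by
  simp [Matrix.mul_apply, Fin.sum_univ_four, col_one_eq_zero hh]

lemma mul_apply_row_three (hg : g ∈ JacobiGroup N) (j : Fin 4) :
    (g * h) 3 j = g 3 3 * h 3 j := by
  simp [Matrix.mul_apply, Fin.sum_univ_four, row_three_eq_zero hg]

/-- The only non-integral entries sit at `(1,3)`, and in `g i k * h k j` they meet the zero
column `1` or the zero row `3` of the other factor. -/
lemma zIntegral_mul_apply (hg : g ∈ JacobiGroup N) (hh : h ∈ JacobiGroup N) {i j : Fin 4}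
    (hij : (i, j) ≠ (1, 3)) : ZIntegral ((g * h) i j) := by
  have hterm : ∀ k, ZIntegral (g i k * h k j) := by
    intro k
    by_cases hkj : k = 1 ∧ j = 3
    · obtain ⟨rfl, rfl⟩ := hkj
      rw [col_one_eq_zero hg (by rintro rfl; exact hij rfl), zero_mul]
      exact .zero
    by_cases hik : i = 1 ∧ k = 3
    · obtain ⟨rfl, rfl⟩ := hik
      rw [row_three_eq_zero hh (by rintro rfl; exact hij rfl), mul_zero]
      exact .zero
    exact (zIntegral hg fun e => hik (Prod.ext_iff.mp e)).mul
      (zIntegral hh fun e => hkj (Prod.ext_iff.mp e))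
  rw [Matrix.mul_apply, Fin.sum_univ_four]
  exact (((hterm 0).add (hterm 1)).add (hterm 2)).add (hterm 3)

lemma exists_mul_apply_one_three (hN : N ≠ 0) (hg : g ∈ JacobiGroup N)
    (hh : h ∈ JacobiGroup N) : ∃ n : ℤ, (g * h) 1 3 = n / N := by
  obtain ⟨m, hm⟩ := ((zIntegral hg (i := 1) (j := 0) (by decide)).mul
    (zIntegral hh (i := 0) (j := 3) (by decide))).add
    ((zIntegral hg (i := 1) (j := 2) (by decide)).mul (zIntegral hh (i := 2) (j := 3) (by decide)))
  obtain ⟨e, he⟩ := ZIntegral.of_abs_eq_one (abs_apply_one_one hg)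
  obtain ⟨f, hf⟩ := ZIntegral.of_abs_eq_one (abs_apply_three_three hh)
  obtain ⟨a, ha⟩ := exists_apply_one_three hg
  obtain ⟨b, hb⟩ := exists_apply_one_three hh
  have hN' : (N : ℝ) ≠ 0 := by exact_mod_cast hN
  have hsum : (g * h) 1 3 = (g 1 0 * h 0 3 + g 1 2 * h 2 3) + g 1 1 * h 1 3 + g 1 3 * h 3 3 := by
    rw [Matrix.mul_apply, Fin.sum_univ_four]; ring
  refine ⟨m * N + e * b + a * f, ?_⟩
  rw [hsum, hm, he, hf, ha, hb]
  push_cast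
  field_simp

lemma mul_mem (hN : N ≠ 0) (hg : g ∈ JacobiGroup N) (hh : h ∈ JacobiGroup N) :
    g * h ∈ JacobiGroup N :=
  mem_of_isSymplectic ((isSymplectic hg).mul (isSymplectic hh))
    (fun _ _ hij => zIntegral_mul_apply hg hh hij) (exists_mul_apply_one_three hN hg hh)
    (fun i hi => by rw [mul_apply_col_one hh, col_one_eq_zero hg hi, zero_mul])
    (fun j hj => by rw [mul_apply_row_three hg, row_three_eq_zero hh hj, mul_zero])
    (by rw [mul_apply_col_one hh, abs_mul, abs_apply_one_one hg, abs_apply_one_one hh, one_mul])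
    (by rw [mul_apply_row_three hg, abs_mul, abs_apply_three_three hg,
      abs_apply_three_three hh, one_mul])

end JacobiGroup

def embedSL2 (a b c d : ℤ) : Matrix (Fin 4) (Fin 4) ℝ :=
  !![(a : ℝ), 0, b, 0; 0, 1, 0, 0; c, 0, d, 0; 0, 0, 0, 1]

lemma embedSL2_mul_embedSL2 (a b c d a' b' c' d' : ℤ) :
    embedSL2 a b c d * embedSL2 a' b' c' d' =
      embedSL2 (a * a' + b * c') (a * b' + b * d') (c * a' + d * c') (c * b' + d * d') := by
  ext i j
  fin_cases i <;> fin_cases j <;> simp [embedSL2, Matrix.mul_apply, Fin.sum_univ_four]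

lemma embedSL2_one : embedSL2 1 0 0 1 = 1 := by
  ext i j
  fin_cases i <;> fin_cases j <;> simp [embedSL2]

lemma embedSL2_mem {N a b c d : ℤ} (h : a * d - b * c = 1) :
    embedSL2 a b c d ∈ JacobiGroup N := by
  have h' : (a : ℝ) * d - b * c = 1 := by exact_mod_cast h
  refine JacobiGroup.mem_of_isSymplectic ?_ ?_ ⟨0, by simp [embedSL2]⟩ ?_ ?_
    (by simp [embedSL2]) (by simp [embedSL2])
  · unfold IsSymplectic
    ext i j
    fin_cases i <;> fin_cases j <;>
      simp [embedSL2, J4, Matrix.mul_apply, Fin.sum_univ_four] <;> linarith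
  · intro i j _
    fin_cases i <;> fin_cases j <;> simp [embedSL2]
  · intro i hi
    fin_cases i <;> simp_all [embedSL2]
  · intro j hj
    fin_cases j <;> simp_all [embedSL2]

noncomputable def symplecticDilation (t : ℝ) : Matrix (Fin 4) (Fin 4) ℝ :=
  diagonal ![t, t, t⁻¹, t⁻¹]

lemma symplecticDilation_mul (s t : ℝ) :
    symplecticDilation s * symplecticDilation t = symplecticDilation (s * t) := by
  rw [symplecticDilation, symplecticDilation, symplecticDilation, diagonal_mul_diagonal]
  congr 1
  ext i
  fin_cases i <;> simp [mul_comm]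

lemma symplecticDilation_one : symplecticDilation 1 = 1 := by
  ext i j
  fin_cases i <;> fin_cases j <;> simp [symplecticDilation]

lemma isSymplectic_symplecticDilation {t : ℝ} (ht : t ≠ 0) :
    IsSymplectic (symplecticDilation t) := by
  unfold IsSymplectic
  ext i j
  fin_cases i <;> fin_cases j <;>
    simp [symplecticDilation, J4, Matrix.mul_apply, Fin.sum_univ_four, ht]

def jacobiCoset (N : ℤ) (M : Matrix (Fin 4) (Fin 4) ℝ) : Set (Matrix (Fin 4) (Fin 4) ℝ) :=
  {X | ∃ g ∈ JacobiGroup N, X = g * M}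

def jacobiDoubleCoset (N : ℤ) (M : Matrix (Fin 4) (Fin 4) ℝ) :
    Set (Matrix (Fin 4) (Fin 4) ℝ) :=
  {X | ∃ g₁ ∈ JacobiGroup N, ∃ g₂ ∈ JacobiGroup N, X = g₁ * M * g₂}

section

variable {N : ℤ} {p : ℕ}

lemma Amat_eq_symplecticDilation : Amat p = symplecticDilation (Real.sqrt p) := by
  ext i j
  fin_cases i <;> fin_cases j <;>
    simp [Amat, symplecticDilation, ← div_eq_inv_mul, Real.div_sqrt]

lemma Bmat_eq (u : ℕ) :
    Bmat p u = embedSL2 0 (-1) 1 0 * Amat p * embedSL2 0 1 (-1) (-u) := by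
  rw [Amat_eq_symplecticDilation]
  ext i j
  fin_cases i <;> fin_cases j <;>
    simp [Bmat, embedSL2, symplecticDilation, Matrix.mul_apply, Fin.sum_univ_four,
      vecMul_diagonal, ← div_eq_inv_mul, Real.div_sqrt]

lemma mul_Amat_apply_zero (g : Matrix (Fin 4) (Fin 4) ℝ) (i : Fin 4) :
    (g * Amat p) i 0 = g i 0 * Real.sqrt p := by
  simp [Amat_eq_symplecticDilation, symplecticDilation]

lemma mul_Amat_apply_two (g : Matrix (Fin 4) (Fin 4) ℝ) (i : Fin 4) :
    (g * Amat p) i 2 = g i 2 * (Real.sqrt p)⁻¹ := by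
  simp [Amat_eq_symplecticDilation, symplecticDilation]

lemma mul_Bmat_apply_zero (g : Matrix (Fin 4) (Fin 4) ℝ) (u : ℕ) (i : Fin 4) :
    (g * Bmat p u) i 0 = (Real.sqrt p)⁻¹ * g i 0 := by
  simp [Bmat, Matrix.mul_apply, Fin.sum_univ_four]
  ring

lemma mul_Bmat_apply_two (g : Matrix (Fin 4) (Fin 4) ℝ) (u : ℕ) (i : Fin 4) :
    (g * Bmat p u) i 2 = (Real.sqrt p)⁻¹ * (u * g i 0 + p * g i 2) := by
  simp [Bmat, Matrix.mul_apply, Fin.sum_univ_four]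
  ring

lemma Amat_mul_mul_symplecticDilation_inv (hp : p ≠ 0) (g : Matrix (Fin 4) (Fin 4) ℝ) :
    Amat p * g * symplecticDilation (Real.sqrt p)⁻¹ =
      !![g 0 0, g 0 1, p * g 0 2, p * g 0 3;
         g 1 0, g 1 1, p * g 1 2, p * g 1 3;
         g 2 0 / p, g 2 1 / p, g 2 2, g 2 3;
         g 3 0 / p, g 3 1 / p, g 3 2, g 3 3] := by
  have hs : Real.sqrt p ≠ 0 := by positivity
  have hsq : Real.sqrt p ^ 2 = p := Real.sq_sqrt (Nat.cast_nonneg p)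
  rw [Amat_eq_symplecticDilation]
  ext i j
  fin_cases i <;> fin_cases j <;>
    simp [symplecticDilation] <;> field_simp <;> simp [hsq, mul_comm]

/-- Of the entries divided by `p` under conjugation by `Amat p`, only `g 2 0` is not forced to
vanish by the Jacobi conditions. -/
lemma exists_mem_Amat_mul_eq (hp : p ≠ 0) {g : Matrix (Fin 4) (Fin 4) ℝ}
    (hg : g ∈ JacobiGroup N) (h20 : ZIntegral (g 2 0 / p)) :
    ∃ h ∈ JacobiGroup N, Amat p * g = h * Amat p := by
  have hs : Real.sqrt p ≠ 0 := by positivity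
  refine ⟨Amat p * g * symplecticDilation (Real.sqrt p)⁻¹, ?_, ?_⟩
  · have hS : IsSymplectic (Amat p * g * symplecticDilation (Real.sqrt p)⁻¹) := by
      rw [Amat_eq_symplecticDilation]
      exact ((isSymplectic_symplecticDilation hs).mul (JacobiGroup.isSymplectic hg)).mul
        (isSymplectic_symplecticDilation (inv_ne_zero hs))
    rw [Amat_mul_mul_symplecticDilation_inv hp] at hS ⊢
    obtain ⟨n, hn⟩ := JacobiGroup.exists_apply_one_three hg
    refine JacobiGroup.mem_of_isSymplectic hS ?_ ⟨p * n, by simp [hn, mul_div_assoc]⟩ ?_ ?_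
      (by simpa using JacobiGroup.abs_apply_one_one hg)
      (by simpa using JacobiGroup.abs_apply_three_three hg)
    · intro i j hij
      fin_cases i <;> fin_cases j <;>
        simp [JacobiGroup.col_one_eq_zero hg, JacobiGroup.row_three_eq_zero hg] at hij ⊢ <;>
        first
          | exact h20
          | exact JacobiGroup.zIntegral hg (by decide)
          | exact (ZIntegral.natCast p).mul (JacobiGroup.zIntegral hg (by decide))
    · intro i hi
      fin_cases i <;> simp_all [JacobiGroup.col_one_eq_zero hg]
    · intro j hj
      fin_cases j <;> simp_all [JacobiGroup.row_three_eq_zero hg]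
  · rw [Amat_eq_symplecticDilation, Matrix.mul_assoc, symplecticDilation_mul,
      inv_mul_cancel₀ hs, symplecticDilation_one, Matrix.mul_one]

lemma disjoint_jacobiCoset_Amat_Bmat (hp : p.Prime) (u : ℕ) :
    Disjoint (jacobiCoset N (Amat p)) (jacobiCoset N (Bmat p u)) := by
  rw [Set.disjoint_left]
  rintro _ ⟨g, hg, rfl⟩ ⟨g', hg', heq⟩
  have hp0 : (p : ℝ) ≠ 0 := by exact_mod_cast hp.ne_zero
  have hs : Real.sqrt p ≠ 0 := by positivity
  have hcol : ∀ i, ZIntegral (g i 2 / p) := by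
    intro i
    have h0 := congrFun (congrFun heq i) 0
    have h2 := congrFun (congrFun heq i) 2
    rw [mul_Amat_apply_zero, mul_Bmat_apply_zero] at h0
    rw [mul_Amat_apply_two, mul_Bmat_apply_two, mul_comm, mul_right_inj' (inv_ne_zero hs)] at h2
    have hg'0 : g' i 0 = p * g i 0 := by
      field_simp at h0
      rw [← h0, Real.sq_sqrt (Nat.cast_nonneg _), mul_comm]
    have hdiv : g i 2 / p = u * g i 0 + g' i 2 := by
      rw [h2, hg'0]
      field_simp
    rw [hdiv]
    exact ((ZIntegral.natCast u).mul (JacobiGroup.zIntegral hg (by simp))).add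
      (JacobiGroup.zIntegral hg' (by simp))
  exact JacobiGroup.false_of_zIntegral_div_col_two hg (by exact_mod_cast hp.one_lt)
    (hcol 0) (hcol 2)

lemma disjoint_jacobiCoset_Bmat (hp : p.Prime) {u v : ℕ} (hu : u < p) (hv : v < p)
    (huv : u ≠ v) : Disjoint (jacobiCoset N (Bmat p u)) (jacobiCoset N (Bmat p v)) := by
  rw [Set.disjoint_left]
  rintro _ ⟨g, hg, rfl⟩ ⟨g', hg', heq⟩
  have hp0 : (p : ℝ) ≠ 0 := by exact_mod_cast hp.ne_zero
  have hs : Real.sqrt p ≠ 0 := by positivity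
  have hcop : IsCoprime ((u : ℤ) - v) p := by
    refine ((Nat.prime_iff_prime_int.mp hp).coprime_iff_not_dvd.2 fun hdvd => huv ?_).symm
    exact Nat.ModEq.eq_of_lt_of_lt ((Nat.modEq_iff_dvd).2 hdvd) hv hu |>.symm
  have hcol : ∀ i, ZIntegral (g i 0 / p) := by
    intro i
    have h0 := congrFun (congrFun heq i) 0
    have h2 := congrFun (congrFun heq i) 2
    rw [mul_Bmat_apply_zero, mul_Bmat_apply_zero, mul_right_inj' (inv_ne_zero hs)] at h0
    rw [mul_Bmat_apply_two, mul_Bmat_apply_two, mul_right_inj' (inv_ne_zero hs)] at h2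
    have hdiv : (((u : ℤ) - v : ℤ) : ℝ) * g i 0 / ((p : ℤ) : ℝ) = g' i 2 - g i 2 := by
      push_cast
      field_simp
      linear_combination h2 - v * h0
    refine ZIntegral.div_of_isCoprime hcop (JacobiGroup.zIntegral hg (by simp)) ?_
    rw [hdiv]
    exact (JacobiGroup.zIntegral hg' (by simp)).sub (JacobiGroup.zIntegral hg (by simp))
  exact JacobiGroup.false_of_zIntegral_div_col_zero hg (by exact_mod_cast hp.one_lt)
    (hcol 0) (hcol 2)

lemma jacobiCoset_Amat_subset : jacobiCoset N (Amat p) ⊆ jacobiDoubleCoset N (Amat p) := by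
  rintro _ ⟨g, hg, rfl⟩
  exact ⟨g, hg, 1, embedSL2_one ▸ embedSL2_mem (by norm_num), (Matrix.mul_one _).symm⟩

lemma jacobiCoset_Bmat_subset (hN : N ≠ 0) (u : ℕ) :
    jacobiCoset N (Bmat p u) ⊆ jacobiDoubleCoset N (Amat p) := by
  rintro _ ⟨g, hg, rfl⟩
  refine ⟨g * embedSL2 0 (-1) 1 0, JacobiGroup.mul_mem hN hg (embedSL2_mem (by norm_num)),
    embedSL2 0 1 (-1) (-u), embedSL2_mem (by norm_num), ?_⟩
  rw [Bmat_eq]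
  simp only [Matrix.mul_assoc]

lemma jacobiDoubleCoset_Amat_subset (hN : N ≠ 0) (hp : p.Prime) :
    jacobiDoubleCoset N (Amat p) ⊆
      jacobiCoset N (Amat p) ∪ ⋃ u ∈ Finset.range p, jacobiCoset N (Bmat p u) := by
  rintro _ ⟨g₁, hg₁, g₂, hg₂, rfl⟩
  obtain ⟨c, hc⟩ := JacobiGroup.zIntegral hg₂ (i := 2) (j := 0) (by decide)
  obtain ⟨d, hd⟩ := JacobiGroup.zIntegral hg₂ (i := 2) (j := 2) (by decide)
  rcases dvd_or_exists_dvd_sub_mul hp c d with hdvd | ⟨u, hu, hdvd⟩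
  · obtain ⟨h, hh, hAh⟩ := exists_mem_Amat_mul_eq hp.ne_zero hg₂
      (by simpa [hc] using ZIntegral.intCast_div_of_dvd hdvd)
    exact Or.inl ⟨g₁ * h, JacobiGroup.mul_mem hN hg₁ hh,
      by rw [Matrix.mul_assoc, hAh, Matrix.mul_assoc]⟩
  set g := g₂ * embedSL2 (-u) (-1) 1 0
  have hg : g ∈ JacobiGroup N := JacobiGroup.mul_mem hN hg₂ (embedSL2_mem (by ring))
  have hg20 : g 2 0 = (d - u * c : ℤ) := by
    simp [g, embedSL2, Matrix.mul_apply, Fin.sum_univ_four, hc, hd]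
    ring
  have hg₂T : g₂ = g * embedSL2 0 1 (-1) (-u) := by
    rw [Matrix.mul_assoc, embedSL2_mul_embedSL2]
    norm_num [embedSL2_one]
  have hS : embedSL2 0 1 (-1) 0 * embedSL2 0 (-1) 1 0 = 1 := by
    rw [embedSL2_mul_embedSL2]
    norm_num [embedSL2_one]
  obtain ⟨h, hh, hAh⟩ := exists_mem_Amat_mul_eq hp.ne_zero hg
    (by simpa [hg20] using ZIntegral.intCast_div_of_dvd hdvd)
  refine Or.inr (Set.mem_iUnion₂.2 ⟨u, Finset.mem_range.2 hu, g₁ * h * embedSL2 0 1 (-1) 0,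
    JacobiGroup.mul_mem hN (JacobiGroup.mul_mem hN hg₁ hh) (embedSL2_mem (by norm_num)), ?_⟩)
  calc g₁ * Amat p * g₂ = g₁ * (Amat p * g) * embedSL2 0 1 (-1) (-u) := by
        rw [hg₂T]; simp only [Matrix.mul_assoc]
    _ = g₁ * h * (embedSL2 0 1 (-1) 0 * embedSL2 0 (-1) 1 0) * Amat p *
          embedSL2 0 1 (-1) (-u) := by
        rw [hAh, hS]; simp only [Matrix.mul_one, Matrix.mul_assoc]
    _ = g₁ * h * embedSL2 0 1 (-1) 0 * Bmat p u := by
        rw [Bmat_eq]; simp only [Matrix.mul_assoc]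

end

/-- The double coset `Σ_N^J · A · Σ_N^J` is the disjoint union of the `p+1` right
cosets `Σ_N^J·A` and `Σ_N^J·B_u`, `u = 0, …, p-1`. -/
theorem doubleCoset_decomposition (N : ℤ) (hN : 1 ≤ N) (p : ℕ) (hp : p.Prime) :
    ({X | ∃ g₁ ∈ JacobiGroup N, ∃ g₂ ∈ JacobiGroup N, X = g₁ * Amat p * g₂}
      = {X | ∃ g ∈ JacobiGroup N, X = g * Amat p} ∪
        ⋃ u ∈ Finset.range p, {X | ∃ g ∈ JacobiGroup N, X = g * Bmat p u}) ∧
    (∀ u ∈ Finset.range p,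
      Disjoint {X | ∃ g ∈ JacobiGroup N, X = g * Amat p}
        {X | ∃ g ∈ JacobiGroup N, X = g * Bmat p u}) ∧
    (∀ u ∈ Finset.range p, ∀ v ∈ Finset.range p, u ≠ v →
      Disjoint {X | ∃ g ∈ JacobiGroup N, X = g * Bmat p u}
        {X | ∃ g ∈ JacobiGroup N, X = g * Bmat p v}) := by
  have hN0 : N ≠ 0 := by omega
  refine ⟨(jacobiDoubleCoset_Amat_subset hN0 hp).antisymm
      (Set.union_subset jacobiCoset_Amat_subset
        (Set.iUnion₂_subset fun u _ => jacobiCoset_Bmat_subset hN0 u)),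
    fun u _ => disjoint_jacobiCoset_Amat_Bmat hp u,
    fun u hu v hv huv => disjoint_jacobiCoset_Bmat hp (mem_range.1 hu) (mem_range.1 hv) huv⟩
end

section
/- Let N ≥ 1 and k be integers and α : ℤ³ → ℂ a function with α(n,r,m) = 0 unless n ≥ 0, m ≥ 0 and 4nmN − r² ≥ 0. Then the following are equivalent. (a): for every prime p and all n,r,m ∈ ℤ, α(n,r,pm) + p^{k−1}·[p∣r and p∣m]·α(n,r/p,m/p) = α(pn,r,m) + p^{k−1}·[p∣n and p∣r]·α(n/p,r/p,m) (terms with failing bracketed divisibility conditions are 0). (b): for all (n,r,m) with m ≥ 1 one has α(n,r,m) = Σ_{δ ∣ gcd(n,r,m), δ ≥ 1} δ^{k−1} α(nm/δ², r/δ, 1), and for all n ≥ 1 one has α(n,0,0) = σ_{k−1}(n)·α(1,0,0). -/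
open scoped Classical
open Complex Matrix Finset

/-!
For every `c : ℤ → ℤ → ℂ`, the function `(n, r, m) ↦ ∑_{δ ∣ gcd(n, r, m)} δ^(k-1) c(nm/δ², r/δ)`
satisfies the relations (ii) at every prime `p`: splitting the divisors of `gcd(n, r, pm)` and of
`gcd(pn, r, m)` according to whether `p` divides them, the parts prime to `p` coincide and the parts
divisible by `p` are exactly the two bracketed correction terms. With `c(D, r) = α(D, r, 1)` this is
the Maaß lift, and with `c ≡ α(1, 0, 0)` it is `σ_{k-1}(n) α(1, 0, 0)` on the singular line.

Conversely, (ii) at `(n, r, m)` expresses `α(n, r, pm)` through coefficients whose last index is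
`m` or `m/p`, and (ii) at `(n, 0, 0)` expresses `α(pn, 0, 0)` through `α(n, 0, 0)` and `α(n/p, 0, 0)`.
So a solution of (ii) is determined by its values at `m = 1` and at `(1, 0, 0)`.

For (b) ⇒ (a): the four coefficients in (ii) lie in the support only if `n, m ≥ 0` and
`r² ≤ 4pnmN`; outside this range both sides vanish, and inside it they are Maaß coefficients
(`m ≥ 1`), singular coefficients (`m = r = 0 < n`), or all equal to `α(0, 0, 0)`.
-/

theorem dvd_gcd3_iff (d : ℕ) (n r m : ℤ) :
    d ∣ gcd3 n r m ↔ (d : ℤ) ∣ n ∧ (d : ℤ) ∣ r ∧ (d : ℤ) ∣ m := by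
  simp only [gcd3, Int.dvd_gcd_iff, Int.natCast_dvd_natCast, and_assoc]

theorem gcd3_eq_zero_iff (n r m : ℤ) : gcd3 n r m = 0 ↔ n = 0 ∧ r = 0 ∧ m = 0 := by
  simp [gcd3, Int.gcd_eq_zero_iff, and_assoc]

theorem gcd3_swap (n r m : ℤ) : gcd3 n r m = gcd3 m r n :=
  Nat.dvd_antisymm
    (by rw [dvd_gcd3_iff]; have := (dvd_gcd3_iff _ n r m).1 dvd_rfl; tauto)
    (by rw [dvd_gcd3_iff]; have := (dvd_gcd3_iff _ m r n).1 dvd_rfl; tauto)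

theorem gcd3_natCast_mul (p : ℕ) (n r m : ℤ) :
    gcd3 (p * n) (p * r) (p * m) = p * gcd3 n r m := by
  simp [gcd3, Int.gcd_mul_left]

theorem gcd3_one_right (n r : ℤ) : gcd3 n r 1 = 1 := by
  simp [gcd3]

theorem gcd3_zero_zero (n : ℤ) : gcd3 n 0 0 = n.natAbs := by
  simp [gcd3, Int.natAbs_abs]

section DivisorSums

variable {M : Type*} [AddCommMonoid M]

theorem Nat.sum_divisors_filter_dvd {p : ℕ} (hp : p ≠ 0) (g : ℕ) (F : ℕ → M) :
    ∑ δ ∈ g.divisors with p ∣ δ, F δ =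
      if p ∣ g then ∑ δ ∈ (g / p).divisors, F (p * δ) else 0 := by
  split_ifs with hpg
  · obtain ⟨g, rfl⟩ := hpg
    rw [Nat.mul_div_cancel_left _ (Nat.pos_of_ne_zero hp),
      ← sum_image fun _ _ _ _ h => Nat.eq_of_mul_eq_mul_left (Nat.pos_of_ne_zero hp) h]
    congr 1
    ext δ
    simp only [mem_filter, Nat.mem_divisors, mem_image, mul_ne_zero_iff, ne_eq]
    constructor
    · rintro ⟨⟨hδ, -, hg⟩, e, rfl⟩
      exact ⟨e, ⟨(Nat.mul_dvd_mul_iff_left (Nat.pos_of_ne_zero hp)).1 hδ, hg⟩, rfl⟩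
    · rintro ⟨e, ⟨he, hg⟩, rfl⟩
      exact ⟨⟨Nat.mul_dvd_mul_left p he, hp, hg⟩, dvd_mul_right p e⟩
  · exact sum_eq_zero fun δ hδ => by
      simp only [mem_filter, Nat.mem_divisors] at hδ
      exact absurd (hδ.2.trans hδ.1.1) hpg

theorem sum_divisors_gcd3_prime_mul_right {p : ℕ} (hp : p.Prime) (F : ℕ → M) (n r m : ℤ) :
    ∑ δ ∈ (gcd3 n r (p * m)).divisors, F δ =
      ∑ δ ∈ (gcd3 n r m).divisors with ¬p ∣ δ, F δ +
        if (p : ℤ) ∣ n ∧ (p : ℤ) ∣ r then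
          ∑ δ ∈ (gcd3 (n / p) (r / p) m).divisors, F (p * δ) else 0 := by
  have hp0 : (p : ℤ) ≠ 0 := by exact_mod_cast hp.ne_zero
  have coprime_part : {δ ∈ (gcd3 n r (p * m)).divisors | ¬p ∣ δ} =
      {δ ∈ (gcd3 n r m).divisors | ¬p ∣ δ} := by
    ext δ
    simp only [mem_filter, Nat.mem_divisors, dvd_gcd3_iff, ne_eq, gcd3_eq_zero_iff,
      mul_eq_zero, hp0, false_or]
    refine and_congr_left fun hδ => and_congr_left fun _ => and_congr_right fun _ =>
      and_congr_right fun _ => ⟨?_, (·.mul_left _)⟩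
    exact (Nat.coprime_comm.1 (hp.coprime_iff_not_dvd.2 hδ)).isCoprime.dvd_of_dvd_mul_left
  have hdvd : p ∣ gcd3 n r (p * m) ↔ (p : ℤ) ∣ n ∧ (p : ℤ) ∣ r := by
    simp [dvd_gcd3_iff]
  rw [← sum_filter_not_add_sum_filter _ (p ∣ ·), coprime_part,
    Nat.sum_divisors_filter_dvd hp.ne_zero]
  refine congrArg _ (ite_congr (propext hdvd) (fun ⟨⟨n, hn⟩, ⟨r, hr⟩⟩ => ?_) fun _ => rfl)
  subst hn hr
  rw [Int.mul_ediv_cancel_left _ hp0, Int.mul_ediv_cancel_left _ hp0, gcd3_natCast_mul,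
    Nat.mul_div_cancel_left _ hp.pos]

theorem sum_divisors_gcd3_prime_mul_add {p : ℕ} (hp : p.Prime) (F : ℕ → M) (n r m : ℤ) :
    ((∑ δ ∈ (gcd3 n r (p * m)).divisors, F δ) +
      if (p : ℤ) ∣ r ∧ (p : ℤ) ∣ m then
        ∑ δ ∈ (gcd3 n (r / p) (m / p)).divisors, F (p * δ) else 0) =
    (∑ δ ∈ (gcd3 (p * n) r m).divisors, F δ) +
      if (p : ℤ) ∣ n ∧ (p : ℤ) ∣ r then
        ∑ δ ∈ (gcd3 (n / p) (r / p) m).divisors, F (p * δ) else 0 := by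
  rw [gcd3_swap (p * n), sum_divisors_gcd3_prime_mul_right hp,
    sum_divisors_gcd3_prime_mul_right hp, gcd3_swap m, gcd3_swap (m / p)]
  simp only [and_comm, add_right_comm]

end DivisorSums

noncomputable def maassTerm (k : ℤ) (c : ℤ → ℤ → ℂ) (D r : ℤ) (δ : ℕ) : ℂ :=
  (δ : ℂ) ^ (k - 1) * c (D / (δ : ℤ) ^ 2) (r / δ)

noncomputable def maassSum (k : ℤ) (c : ℤ → ℤ → ℂ) (n r m : ℤ) : ℂ :=
  ∑ δ ∈ (gcd3 n r m).divisors, maassTerm k c (n * m) r δ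

theorem maassTerm_natCast_mul {p : ℕ} (hp : p ≠ 0) (k : ℤ) (c : ℤ → ℤ → ℂ) (D r : ℤ) (δ : ℕ) :
    maassTerm k c (p ^ 2 * D) (p * r) (p * δ) = (p : ℂ) ^ (k - 1) * maassTerm k c D r δ := by
  have hp' : (0 : ℤ) < p := by exact_mod_cast Nat.pos_of_ne_zero hp
  simp only [maassTerm, Nat.cast_mul, mul_zpow, mul_pow, Int.mul_ediv_mul_of_pos _ _ hp',
    Int.mul_ediv_mul_of_pos _ _ (pow_pos hp' 2)]
  ring

theorem natCast_zpow_mul_maassSum {p : ℕ} (hp : p ≠ 0) (k : ℤ) (c : ℤ → ℤ → ℂ) (n r m : ℤ) :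
    (p : ℂ) ^ (k - 1) * maassSum k c n r m =
      ∑ δ ∈ (gcd3 n r m).divisors, maassTerm k c (p ^ 2 * (n * m)) (p * r) (p * δ) := by
  simp only [maassSum, mul_sum, maassTerm_natCast_mul hp]

theorem maassSum_one_right (k : ℤ) (c : ℤ → ℤ → ℂ) (n r : ℤ) : maassSum k c n r 1 = c n r := by
  simp [maassSum, maassTerm, gcd3_one_right]

theorem maassSum_const_zero_zero (k : ℤ) (c : ℂ) (n : ℤ) :
    maassSum k (fun _ _ => c) n 0 0 = sigmaz k n.natAbs * c := by
  simp [maassSum, maassTerm, gcd3_zero_zero, sigmaz, sum_mul]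

theorem heckeCondition_maassSum {p : ℕ} (hp : p.Prime) (k : ℤ) (c : ℤ → ℤ → ℂ) :
    HeckeCondition k p (maassSum k c) := by
  intro n r m
  have hp0 : (p : ℤ) ≠ 0 := by exact_mod_cast hp.ne_zero
  have hr : (p : ℤ) ∣ r ∧ (p : ℤ) ∣ m → (p : ℂ) ^ (k - 1) * maassSum k c n (r / p) (m / p) =
      ∑ δ ∈ (gcd3 n (r / p) (m / p)).divisors, maassTerm k c (n * (p * m)) r (p * δ) := by
    rintro ⟨⟨r, rfl⟩, ⟨m, rfl⟩⟩
    rw [Int.mul_ediv_cancel_left _ hp0, Int.mul_ediv_cancel_left _ hp0,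
      natCast_zpow_mul_maassSum hp.ne_zero, show n * (p * (p * m)) = p ^ 2 * (n * m) by ring]
  have hn : (p : ℤ) ∣ n ∧ (p : ℤ) ∣ r → (p : ℂ) ^ (k - 1) * maassSum k c (n / p) (r / p) m =
      ∑ δ ∈ (gcd3 (n / p) (r / p) m).divisors, maassTerm k c (n * (p * m)) r (p * δ) := by
    rintro ⟨⟨n, rfl⟩, ⟨r, rfl⟩⟩
    rw [Int.mul_ediv_cancel_left _ hp0, Int.mul_ediv_cancel_left _ hp0,
      natCast_zpow_mul_maassSum hp.ne_zero, show p * n * (p * m) = p ^ 2 * (n * m) by ring]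
  simp only [mul_ite, mul_zero]
  rw [ite_congr rfl hr fun _ => rfl, ite_congr rfl hn fun _ => rfl, maassSum, maassSum,
    show p * n * m = n * (p * m) by ring]
  exact sum_divisors_gcd3_prime_mul_add hp _ n r m

def HeckeRelation (k : ℤ) (p : ℕ) (a : ℤ → ℤ → ℤ → ℂ) (n r m : ℤ) : Prop :=
  a n r (p * m) + (p : ℂ) ^ (k - 1) *
      (if (p : ℤ) ∣ r ∧ (p : ℤ) ∣ m then a n (r / p) (m / p) else 0)
    = a (p * n) r m + (p : ℂ) ^ (k - 1) *
      (if (p : ℤ) ∣ n ∧ (p : ℤ) ∣ r then a (n / p) (r / p) m else 0)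

section HeckeRelation

variable {k : ℤ} {p : ℕ} {a b : ℤ → ℤ → ℤ → ℂ} {n r m : ℤ}

theorem HeckeRelation.sub (ha : HeckeRelation k p a n r m) (hb : HeckeRelation k p b n r m) :
    HeckeRelation k p (a - b) n r m := by
  unfold HeckeRelation at *
  simp only [Pi.sub_apply]
  split_ifs at * <;> linear_combination ha - hb

theorem HeckeCondition.sub (ha : HeckeCondition k p a) (hb : HeckeCondition k p b) :
    HeckeCondition k p (a - b) :=
  fun n r m => HeckeRelation.sub (ha n r m) (hb n r m)

theorem HeckeRelation.congr (h₁ : a n r (p * m) = b n r (p * m))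
    (h₂ : (p : ℤ) ∣ r ∧ (p : ℤ) ∣ m → a n (r / p) (m / p) = b n (r / p) (m / p))
    (h₃ : a (p * n) r m = b (p * n) r m)
    (h₄ : (p : ℤ) ∣ n ∧ (p : ℤ) ∣ r → a (n / p) (r / p) m = b (n / p) (r / p) m)
    (hb : HeckeRelation k p b n r m) : HeckeRelation k p a n r m := by
  rwa [HeckeRelation, h₁, h₃, ite_congr rfl h₂ fun _ => rfl, ite_congr rfl h₄ fun _ => rfl]

theorem HeckeRelation.of_eq_of_pos (hp : 0 < p) (hab : ∀ n r m, 0 < m → a n r m = b n r m)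
    (hm : 0 < m) (hb : HeckeRelation k p b n r m) : HeckeRelation k p a n r m := by
  have hp : (0 : ℤ) < p := by exact_mod_cast hp
  refine hb.congr (hab _ _ _ (by positivity)) (fun ⟨_, hpm⟩ => hab _ _ _ ?_) (hab _ _ _ hm)
    fun _ => hab _ _ _ hm
  exact Int.ediv_pos_of_pos_of_dvd hm hp.le hpm

theorem HeckeRelation.of_eq_of_pos_zero_zero (hp : 0 < p)
    (hab : ∀ n, 0 < n → a n 0 0 = b n 0 0)
    (hn : 0 < n) (hb : HeckeRelation k p b n 0 0) : HeckeRelation k p a n 0 0 := by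
  have hp : (0 : ℤ) < p := by exact_mod_cast hp
  refine hb.congr ?_ (fun _ => ?_) (hab _ (by positivity)) fun ⟨hpn, _⟩ => ?_
  · simpa using hab n hn
  · simpa using hab n hn
  · simpa using hab _ (Int.ediv_pos_of_pos_of_dvd hn hp.le hpn)

end HeckeRelation

theorem heckeRelation_of_not_mem_support {k N : ℤ} {p : ℕ} {a : ℤ → ℤ → ℤ → ℂ} {n r m : ℤ}
    (hp : 0 < p) (hsupp : ∀ n r m : ℤ, ¬(0 ≤ n ∧ 0 ≤ m ∧ r ^ 2 ≤ 4 * n * m * N) → a n r m = 0)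
    (h : ¬(0 ≤ n ∧ 0 ≤ m ∧ r ^ 2 ≤ 4 * p * n * m * N)) : HeckeRelation k p a n r m := by
  have hp : (0 : ℤ) < p := by exact_mod_cast hp
  have hp0 : (p : ℤ) ≠ 0 := hp.ne'
  refine HeckeRelation.congr (b := 0) ?_ ?_ ?_ ?_ (by simp [HeckeRelation])
  · refine hsupp _ _ _ fun ⟨hn, hm, hr⟩ => h ⟨hn, ?_, by linarith⟩
    exact nonneg_of_mul_nonneg_right (by linarith) hp
  · rintro ⟨⟨r, rfl⟩, ⟨m, rfl⟩⟩
    rw [Int.mul_ediv_cancel_left _ hp0, Int.mul_ediv_cancel_left _ hp0]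
    refine hsupp _ _ _ fun ⟨hn, hm, hr⟩ => h ⟨hn, by positivity, ?_⟩
    nlinarith [mul_le_mul_of_nonneg_left hr (sq_nonneg (p : ℤ))]
  · refine hsupp _ _ _ fun ⟨hn, hm, hr⟩ => h ⟨?_, hm, by linarith⟩
    exact nonneg_of_mul_nonneg_right (by linarith) hp
  · rintro ⟨⟨n, rfl⟩, ⟨r, rfl⟩⟩
    rw [Int.mul_ediv_cancel_left _ hp0, Int.mul_ediv_cancel_left _ hp0]
    refine hsupp _ _ _ fun ⟨hn, hm, hr⟩ => h ⟨by positivity, hm, ?_⟩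
    nlinarith [mul_le_mul_of_nonneg_left hr (sq_nonneg (p : ℤ))]

theorem Nat.induction_on_prime_mul {P : ℕ → Prop} (one : P 1)
    (prime_mul : ∀ p m, p.Prime → m ≠ 0 → (∀ j, j ≠ 0 → j ≤ m → P j) → P (p * m)) :
    ∀ m, m ≠ 0 → P m := by
  intro m
  induction m using Nat.strong_induction_on with
  | _ m ih =>
    intro hm
    obtain rfl | hm1 := eq_or_ne m 1
    · exact one
    obtain ⟨p, hp, j, rfl⟩ := Nat.exists_prime_and_dvd hm1
    have hj : j ≠ 0 := right_ne_zero_of_mul hm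
    exact prime_mul p j hp hj fun i hi hij =>
      ih i (hij.trans_lt (lt_mul_of_one_lt_left (Nat.pos_of_ne_zero hj) hp.one_lt)) hi

section Vanishing

variable {k : ℤ} {d : ℤ → ℤ → ℤ → ℂ}

theorem ite_eq_zero_of_natCast_dvd {q m : ℕ} (hq : q ≠ 0) (hm : m ≠ 0) {P : Prop} [Decidable P]
    (hP : P → (q : ℤ) ∣ m) (f : ℤ → ℂ) (hf : ∀ j : ℕ, j ≠ 0 → j ≤ m → f j = 0) :
    (if P then f (m / q) else 0) = 0 := by
  split_ifs with h
  · have hqm := Int.natCast_dvd_natCast.1 (hP h)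
    rw [← Int.natCast_div]
    exact hf _ ((Nat.div_ne_zero_iff_of_dvd hqm).2 ⟨hm, hq⟩) (Nat.div_le_self _ _)
  · rfl

theorem eq_zero_of_heckeCondition_of_forall_eq_zero_one
    (hd : ∀ p : ℕ, p.Prime → HeckeCondition k p d) (h₁ : ∀ n r, d n r 1 = 0)
    {m : ℤ} (hm : 0 < m) (n r : ℤ) : d n r m = 0 := by
  lift m to ℕ using hm.le
  revert n r
  refine Nat.induction_on_prime_mul (P := fun m : ℕ => ∀ n r : ℤ, d n r m = 0)
    (by simpa using h₁) (fun q m hq hm ih n r => ?_) m (by omega)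
  have h := hd q hq n r m
  rw [ite_eq_zero_of_natCast_dvd hq.ne_zero hm And.right _ fun j hj hjm => ih j hj hjm n _,
    ih m hm le_rfl, ite_congr rfl (fun _ => ih m hm le_rfl _ _) fun _ => rfl] at h
  simpa using h

theorem eq_zero_zero_zero_of_heckeCondition (hd : ∀ p : ℕ, p.Prime → HeckeCondition k p d)
    (h₁ : d 1 0 0 = 0) {n : ℤ} (hn : 0 < n) : d n 0 0 = 0 := by
  lift n to ℕ using hn.le
  refine Nat.induction_on_prime_mul (P := fun n : ℕ => d n 0 0 = 0) (by simpa using h₁)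
    (fun q n hq hn ih => ?_) n (by omega)
  have h := hd q hq n 0 0
  simp only [mul_zero, Int.zero_ediv, dvd_zero, and_true, if_true, ih n hn le_rfl] at h
  rw [ite_eq_zero_of_natCast_dvd hq.ne_zero hn id (fun j => d j 0 0) ih] at h
  simpa using h.symm

end Vanishing

theorem corollary1_coefficients_general (N k : ℤ) (a : ℤ → ℤ → ℤ → ℂ)
    (hsupp : ∀ n r m : ℤ, ¬(0 ≤ n ∧ 0 ≤ m ∧ r ^ 2 ≤ 4 * n * m * N) → a n r m = 0) :
    (∀ p : ℕ, p.Prime → HeckeCondition k p a) ↔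
    ((∀ n r m : ℤ, 1 ≤ m →
        a n r m = ∑ δ ∈ (gcd3 n r m).divisors,
          (δ : ℂ) ^ (k - 1) * a (n * m / (δ : ℤ) ^ 2) (r / (δ : ℤ)) 1) ∧
      (∀ n : ℤ, 1 ≤ n → a n 0 0 = sigmaz k n.toNat * a 1 0 0)) := by
  have hsing (n : ℤ) (hn : 0 < n) :
      maassSum k (fun _ _ => a 1 0 0) n 0 0 = sigmaz k n.toNat * a 1 0 0 := by
    rw [maassSum_const_zero_zero, show n.natAbs = n.toNat by omega]
  refine ⟨fun ha => ⟨fun n r m hm => ?_, fun n hn => ?_⟩, fun ⟨hmaass, hsigma⟩ p hp n r m => ?_⟩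
  · refine sub_eq_zero.1 (eq_zero_of_heckeCondition_of_forall_eq_zero_one
      (fun p hp => (ha p hp).sub (heckeCondition_maassSum hp k fun D r => a D r 1)) ?_ hm n r)
    simp [maassSum_one_right]
  · rw [← hsing n hn]
    refine sub_eq_zero.1 (eq_zero_zero_zero_of_heckeCondition
      (fun p hp => (ha p hp).sub (heckeCondition_maassSum hp k fun _ _ => a 1 0 0)) ?_ hn)
    simp [hsing 1 one_pos, sigmaz]
  · by_cases hs : 0 ≤ n ∧ 0 ≤ m ∧ r ^ 2 ≤ 4 * p * n * m * N
    · obtain ⟨hn, hm, hr⟩ := hs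
      obtain hm | rfl := hm.lt_or_eq
      · exact HeckeRelation.of_eq_of_pos hp.pos hmaass hm
          (heckeCondition_maassSum hp k (fun D r => a D r 1) n r m)
      obtain rfl : r = 0 := by simpa using hr
      obtain hn | rfl := hn.lt_or_eq
      · exact HeckeRelation.of_eq_of_pos_zero_zero hp.pos
          (fun n hn => (hsigma n hn).trans (hsing n hn).symm) hn
          (heckeCondition_maassSum hp k _ n 0 0)
      · simp
    · exact heckeRelation_of_not_mem_support hp.pos hsupp hs

/-- Corollary 1, coefficient level: the prime-by-prime conditions (ii) for all primes are
equivalent to the Maaß relations for `m ≥ 1` together with the divisor-sum relation on the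
singular coefficients `a(n,0,0)`. -/
theorem corollary1_coefficients (N k : ℤ) (hN : 1 ≤ N) (a : ℤ → ℤ → ℤ → ℂ)
    (hsupp : ∀ n r m : ℤ, ¬(0 ≤ n ∧ 0 ≤ m ∧ r ^ 2 ≤ 4 * n * m * N) → a n r m = 0) :
    (∀ p : ℕ, p.Prime → HeckeCondition k p a) ↔
    ((∀ n r m : ℤ, 1 ≤ m →
        a n r m = ∑ δ ∈ (gcd3 n r m).divisors,
          (δ : ℂ) ^ (k - 1) * a (n * m / (δ : ℤ) ^ 2) (r / (δ : ℤ)) 1) ∧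
      (∀ n : ℤ, 1 ≤ n → a n 0 0 = sigmaz k n.toNat * a 1 0 0)) :=
  corollary1_coefficients_general N k a hsupp
end

section
/- Let N ≥ 1, let d be a positive divisor of N, and let α, γ ∈ ℤ satisfy αd − γN/d = 1. Then the 3×3 matrix M₆ := [[d, −γ, γ²N/d], [−2N, αd + γN/d, −2αγN], [N/d, −α, α²d]] has integer entries and determinant 1, and for every (n,r,m) ∈ ℤ³ the vector (n′,r′,m′) := M₆·(n,r,m)ᵗ satisfies gcd(n′,r′,m′) = gcd(n,r,m). -/
open scoped Classical
open Complex Matrix Finset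

/-! An integer matrix with unit determinant has an integral inverse, so `v` and `A *ᵥ v` are
integer combinations of each other and have the same common divisors. For `M₆` the
determinant is `(αd - γN/d)³ = 1`. -/

open Matrix

theorem Matrix.dvd_mulVec_apply {n R : Type*} [Fintype n] [CommRing R] (A : Matrix n n R)
    {k : R} {v : n → R} (hv : ∀ j, k ∣ v j) (i : n) : k ∣ (A *ᵥ v) i :=
  Finset.dvd_sum fun j _ => (hv j).mul_left _

theorem Matrix.forall_dvd_mulVec_iff {n R : Type*} [Fintype n] [DecidableEq n] [CommRing R]
    {A : Matrix n n R} (hA : IsUnit A.det) {k : R} {v : n → R} :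
    (∀ i, k ∣ (A *ᵥ v) i) ↔ ∀ i, k ∣ v i := by
  refine ⟨fun h => ?_, A.dvd_mulVec_apply⟩
  have hv : A⁻¹ *ᵥ (A *ᵥ v) = v := by rw [mulVec_mulVec, nonsing_inv_mul A hA, one_mulVec]
  rw [← hv]
  exact A⁻¹.dvd_mulVec_apply h

theorem Int.dvd_gcd_gcd_iff {k : ℕ} {v : Fin 3 → ℤ} :
    k ∣ Int.gcd (Int.gcd (v 0) (v 1)) (v 2) ↔ ∀ i, (k : ℤ) ∣ v i := by
  simp [Int.dvd_gcd_iff, Int.natCast_dvd_natCast, Fin.forall_fin_succ, and_assoc]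

theorem Matrix.gcd_gcd_mulVec {A : Matrix (Fin 3) (Fin 3) ℤ} (hA : IsUnit A.det)
    (v : Fin 3 → ℤ) :
    Int.gcd (Int.gcd ((A *ᵥ v) 0) ((A *ᵥ v) 1)) ((A *ᵥ v) 2) =
      Int.gcd (Int.gcd (v 0) (v 1)) (v 2) :=
  Nat.dvd_left_iff_eq.mp fun k => by
    rw [Int.dvd_gcd_gcd_iff, Int.dvd_gcd_gcd_iff, forall_dvd_mulVec_iff hA]

/-- The matrix `M₆` for `N = d * e`. -/
def matrix6 (d e α γ : ℤ) : Matrix (Fin 3) (Fin 3) ℤ :=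
  !![d, -γ, γ ^ 2 * e;
     -2 * (d * e), α * d + γ * e, -2 * α * γ * (d * e);
     e, -α, α ^ 2 * d]

theorem det_matrix6 {d e α γ : ℤ} (h : α * d - γ * e = 1) : (matrix6 d e α γ).det = 1 := by
  simp only [matrix6, det_fin_three, of_apply, cons_val', cons_val_zero, cons_val_one,
    Matrix.cons_val, cons_val_fin_one]
  linear_combination ((α * d - γ * e) ^ 2 + (α * d - γ * e) + 1) * h

theorem matrix6_mulVec (d e α γ n r m : ℤ) :
    matrix6 d e α γ *ᵥ ![n, r, m] =
      ![d * n - γ * r + γ ^ 2 * e * m,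
        -2 * (d * e) * n + (α * d + γ * e) * r - 2 * α * γ * (d * e) * m,
        e * n - α * r + α ^ 2 * d * m] := by
  ext i
  fin_cases i <;>
    simp only [matrix6, mulVec, dotProduct, Fin.sum_univ_three, of_apply, cons_val', cons_val_zero,
      cons_val_one, Matrix.cons_val, cons_val_fin_one, Fin.zero_eta, Fin.mk_one, Fin.reduceFinMk] <;>
    ring

theorem matrix6_SL3_and_gcd_general (N d : ℤ) (hdN : d ∣ N)
    (α γ : ℤ) (h : α * d - γ * (N / d) = 1) :
    (!![d, -γ, γ ^ 2 * (N / d);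
        -2 * N, α * d + γ * (N / d), -2 * α * γ * N;
        N / d, -α, α ^ 2 * d] : Matrix (Fin 3) (Fin 3) ℤ).det = 1 ∧
    ∀ n r m : ℤ,
      Int.gcd (Int.gcd (d * n - γ * r + γ ^ 2 * (N / d) * m)
          (-2 * N * n + (α * d + γ * (N / d)) * r - 2 * α * γ * N * m))
        ((N / d) * n - α * r + α ^ 2 * d * m)
      = Int.gcd (Int.gcd n r) m := by
  obtain ⟨e, rfl⟩ := hdN
  have hd : d ≠ 0 := by rintro rfl; simp at h
  rw [Int.mul_ediv_cancel_left e hd] at h ⊢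
  have hdet : (matrix6 d e α γ).det = 1 := det_matrix6 h
  refine ⟨hdet, fun n r m => ?_⟩
  have hgcd := gcd_gcd_mulVec (hdet ▸ isUnit_one) ![n, r, m]
  rw [matrix6_mulVec] at hgcd
  exact hgcd

/-- The transformation matrix (6): it lies in `SL₃(ℤ)` and preserves `gcd(n,r,m)`. -/
theorem matrix6_SL3_and_gcd (N d : ℤ) (hN : 1 ≤ N) (hd : 0 < d) (hdN : d ∣ N)
    (α γ : ℤ) (h : α * d - γ * (N / d) = 1) :
    (!![d, -γ, γ ^ 2 * (N / d);
        -2 * N, α * d + γ * (N / d), -2 * α * γ * N;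
        N / d, -α, α ^ 2 * d] : Matrix (Fin 3) (Fin 3) ℤ).det = 1 ∧
    ∀ n r m : ℤ,
      Int.gcd (Int.gcd (d * n - γ * r + γ ^ 2 * (N / d) * m)
          (-2 * N * n + (α * d + γ * (N / d)) * r - 2 * α * γ * N * m))
        ((N / d) * n - α * r + α ^ 2 * d * m)
      = Int.gcd (Int.gcd n r) m :=
  matrix6_SL3_and_gcd_general N d hdN α γ h
end

section
/- Let N ≥ 1 be squarefree and let r, r′ ∈ ℤ satisfy r² ≡ r′² (mod 4N). Then there exists a positive divisor d of N such that r ≡ −r′ (mod 2d) and r ≡ r′ (mod 2N/d). -/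
open scoped Classical
open Complex Matrix Finset

/-! Write `r - r' = 2a` and `r + r' = 2b`: both are even because `r² ≡ r'² (mod 2)`, and then
`4N ∣ r² - r'² = 4ab` gives `N ∣ ab`. Splitting `N = (N/d) · d` with `N/d ∣ a` and `d ∣ b` yields
`r + r' = 2b ≡ 0 (mod 2d)` and `r - r' = 2a ≡ 0 (mod 2N/d)`. -/

theorem Int.two_dvd_sub_of_two_dvd_sq_sub {x y : ℤ} (h : 2 ∣ x ^ 2 - y ^ 2) : 2 ∣ x - y := by
  simpa [← even_iff_two_dvd, Int.even_sub, Int.even_pow] using h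

theorem Int.exists_pos_dvd_dvd_of_dvd_mul {N a b : ℤ} (hN : 0 < N) (h : N ∣ a * b) :
    ∃ d, 0 < d ∧ d ∣ N ∧ d ∣ b ∧ N / d ∣ a := by
  obtain ⟨k₁, k₂, hk₁, hk₂, hk⟩ :=
    Nat.dvd_mul.mp (Int.natAbs_mul a b ▸ Int.natAbs_dvd_natAbs.mpr h)
  have hN_eq : N = k₁ * k₂ := by rw [← Int.natAbs_of_nonneg hN.le, ← hk]; push_cast; rfl
  have hk₂_pos : 0 < (k₂ : ℤ) := pos_of_mul_pos_right (hN_eq ▸ hN) (Int.natCast_nonneg k₁)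
  refine ⟨k₂, hk₂_pos, ⟨k₁, by rw [hN_eq, mul_comm]⟩, Int.natCast_dvd.mpr hk₂, ?_⟩
  rw [hN_eq, Int.mul_ediv_cancel _ hk₂_pos.ne']
  exact Int.natCast_dvd.mpr hk₁

theorem Int.modEq_of_sub_eq_two_mul {x y c m : ℤ} (h : x - y = 2 * c) (hm : m ∣ c) :
    x ≡ y [ZMOD 2 * m] :=
  (Int.modEq_iff_dvd.mpr (h ▸ mul_dvd_mul_left 2 hm)).symm

theorem exists_divisor_of_sq_congruent_general (N : ℤ) (hN : 1 ≤ N)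
    (r r' : ℤ) (h : r ^ 2 ≡ r' ^ 2 [ZMOD 4 * N]) :
    ∃ d : ℤ, 0 < d ∧ d ∣ N ∧ r ≡ -r' [ZMOD 2 * d] ∧ r ≡ r' [ZMOD 2 * (N / d)] := by
  have h4N : 4 * N ∣ r ^ 2 - r' ^ 2 := h.symm.dvd
  obtain ⟨a, ha⟩ : 2 ∣ r - r' :=
    Int.two_dvd_sub_of_two_dvd_sq_sub (dvd_trans ⟨2 * N, by ring⟩ h4N)
  have hb : r + r' = 2 * (a + r') := by omega
  have hNab : N ∣ a * (a + r') := by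
    have h_sq : r ^ 2 - r' ^ 2 = 4 * (a * (a + r')) := by
      linear_combination (r + r') * ha + 2 * a * hb
    exact (mul_dvd_mul_iff_left four_ne_zero).mp (h_sq ▸ h4N)
  obtain ⟨d, hd, hdN, hdb, hNda⟩ := Int.exists_pos_dvd_dvd_of_dvd_mul (by omega) hNab
  exact ⟨d, hd, hdN, Int.modEq_of_sub_eq_two_mul (by rw [sub_neg_eq_add, hb]) hdb,
    Int.modEq_of_sub_eq_two_mul ha hNda⟩

/-- If `N` is squarefree and `r² ≡ r′² (mod 4N)`, there is a divisor `d` of `N` with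
`r ≡ -r′ (mod 2d)` and `r ≡ r′ (mod 2N/d)`. -/
theorem exists_divisor_of_sq_congruent (N : ℤ) (hN : 1 ≤ N) (hsf : Squarefree N)
    (r r' : ℤ) (h : r ^ 2 ≡ r' ^ 2 [ZMOD 4 * N]) :
    ∃ d : ℤ, 0 < d ∧ d ∣ N ∧ r ≡ -r' [ZMOD 2 * d] ∧ r ≡ r' [ZMOD 2 * (N / d)] :=
  exists_divisor_of_sq_congruent_general N hN r r' h
end

section
/- Let N ≥ 1 be squarefree, let n, m ≥ 0 and r ∈ ℤ with (n,r,m) ≠ (0,0,0), and suppose the matrix T := [[n, r/2],[r/2, mN]] is positive semidefinite with det T = 0 (i.e. 4nmN = r²). Then there exist a positive divisor d of N and integers a, b, c, e with the matrix U := (1/√d)·[[ad, bN],[c, ed]] satisfying det U = 1 and UᵗTU = [[t, 0],[0, 0]], where t := gcd(n,r,m). -/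
open scoped Classical
open Complex Matrix Finset

/-!
Let `g = gcd(n, m)`. From `r² = 4nmN` we get `2g ∣ r`, and `n₁ = n/g`, `m₁ = m/g`, `ρ = r/(2g)`
satisfy `ρ² = n₁m₁N` with `n₁, m₁` coprime, so that also `g = gcd(n, r, m)`. Put `d = gcd(n₁, N)`
and `N = dN'`; as `N` is squarefree, `d` and `N'` are coprime, and unique factorization yields
`n₁ = dα²`, `m₁ = N'β²`, `ρ = dα·N'β` with `dα` and `N'β` coprime. Hence `T = g d·wwᵀ` for
`w = (α, N'β)`. A Bézout relation `u·dα + v·N'β = 1` gives `U = (1/√d)[[ud, -βN], [v, αd]]`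
of determinant one with `Uᵀw = (1/√d, 0)`, so `UᵀTU = diag(g, 0)`.
-/

theorem Int.exists_eq_sq_eq_sq_of_isCoprime {a b c : ℤ} (hab : IsCoprime a b) (ha : 0 ≤ a)
    (hb : 0 ≤ b) (h : a * b = c ^ 2) : ∃ x y : ℤ, a = x ^ 2 ∧ b = y ^ 2 ∧ c = x * y := by
  have eq_sq {a b : ℤ} (hab : IsCoprime a b) (ha : 0 ≤ a) (h : a * b = c ^ 2) :
      ∃ x, a = x ^ 2 := by
    obtain ⟨x, hx | hx⟩ := Int.sq_of_isCoprime hab h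
    · exact ⟨x, hx⟩
    · exact ⟨x, by linarith [sq_nonneg x]⟩
  obtain ⟨x, rfl⟩ := eq_sq hab ha h
  obtain ⟨y, rfl⟩ := eq_sq hab.symm hb (by rw [mul_comm, h])
  rcases sq_eq_sq_iff_eq_or_eq_neg.1 (h.symm.trans (mul_pow x y 2).symm) with hc | hc
  · exact ⟨x, y, rfl, rfl, hc⟩
  · exact ⟨x, -y, rfl, by ring, by rw [hc]; ring⟩

theorem exists_eq_mul_sq_of_isCoprime_of_sq_eq {N n m ρ : ℤ} (hN : 0 < N) (hsf : Squarefree N)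
    (hn : 0 ≤ n) (hm : 0 ≤ m) (hnm : IsCoprime n m) (hρ : ρ ^ 2 = n * m * N) :
    ∃ d N' α β : ℤ, 0 < d ∧ N = d * N' ∧ IsCoprime (d * α) (N' * β) ∧
      n = d * α ^ 2 ∧ m = N' * β ^ 2 ∧ ρ = d * α * (N' * β) := by
  obtain ⟨d, n', N', hd, hn'N', rfl, rfl⟩ :=
    Int.exists_gcd_one' (Int.gcd_pos_of_ne_zero_right n hN.ne')
  have hd : (0 : ℤ) < d := by exact_mod_cast hd
  have hN' : 0 < N' := pos_of_mul_pos_left hN hd.le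
  have hdN' : IsCoprime (d : ℤ) N' := (squarefree_mul_iff.1 (mul_comm N' d ▸ hsf)).1.isCoprime
  obtain ⟨ρ', rfl⟩ : (d : ℤ) ∣ ρ := by
    rw [← Int.pow_dvd_pow_iff two_ne_zero, hρ]
    exact ⟨n' * m * N', by ring⟩
  have hρ' : n' * (m * N') = ρ' ^ 2 :=
    (mul_left_cancel₀ (pow_ne_zero 2 hd.ne') (by linear_combination hρ)).symm
  have hcop : IsCoprime n' (m * N') :=
    (hnm.of_isCoprime_of_dvd_left (dvd_mul_right n' d)).mul_right
      (Int.isCoprime_iff_gcd_eq_one.2 hn'N')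
  obtain ⟨α, γ, rfl, hγ, rfl⟩ := Int.exists_eq_sq_eq_sq_of_isCoprime hcop
    (nonneg_of_mul_nonneg_left hn hd) (by positivity) hρ'
  obtain ⟨β, rfl⟩ : N' ∣ γ :=
    (hsf.of_mul_left.dvd_pow_iff_dvd two_ne_zero).1 ⟨m, by rw [← hγ, mul_comm]⟩
  have hdγ : IsCoprime (d : ℤ) (N' * β) := by
    rw [← IsCoprime.pow_right_iff two_pos, ← hγ]
    exact (hnm.of_isCoprime_of_dvd_left (dvd_mul_left _ _)).mul_right hdN'
  have hαγ : IsCoprime α (N' * β) := by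
    rwa [← IsCoprime.pow_iff two_pos two_pos, ← hγ]
  refine ⟨d, N', α, β, hd, by ring, hdγ.mul_left hαγ, by ring, ?_, by ring⟩
  exact mul_left_cancel₀ hN'.ne' (by linear_combination hγ)

theorem gcd3_mul_right_eq_of_isCoprime {a c : ℤ} (b : ℤ) (g : ℕ) (hac : IsCoprime a c) :
    gcd3 (a * g) (b * g) (c * g) = g := by
  have h : Int.gcd (Int.gcd a b) c = 1 :=
    Int.isCoprime_iff_gcd_eq_one.1 (hac.of_isCoprime_of_dvd_left (Int.gcd_dvd_left _ _))
  rw [gcd3, Int.gcd_mul_right, Int.natAbs_natCast, Nat.cast_mul, Int.gcd_mul_right, h]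
  simp

theorem exists_rank_one_decomposition {N n r m : ℤ} (hN : 0 < N) (hsf : Squarefree N)
    (hn : 0 ≤ n) (hm : 0 ≤ m) (hne : ¬(n = 0 ∧ r = 0 ∧ m = 0)) (hdet : 4 * n * m * N = r ^ 2) :
    ∃ d N' α β : ℤ, 0 < d ∧ N = d * N' ∧ IsCoprime (d * α) (N' * β) ∧
      n = gcd3 n r m * d * α ^ 2 ∧ r = 2 * gcd3 n r m * d * α * (N' * β) ∧
      m = gcd3 n r m * N' * β ^ 2 := by
  have hnm : 0 < Int.gcd n m := by
    refine Int.gcd_pos_iff.2 (not_and_or.1 fun h => hne ⟨h.1, ?_, h.2⟩)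
    simpa [h.1] using hdet.symm
  obtain ⟨g, n', m', hg, hn'm', rfl, rfl⟩ := Int.exists_gcd_one' hnm
  have hg : (0 : ℤ) < g := by exact_mod_cast hg
  have hn'm' : IsCoprime n' m' := Int.isCoprime_iff_gcd_eq_one.2 hn'm'
  obtain ⟨ρ, rfl⟩ : 2 * (g : ℤ) ∣ r := by
    rw [← Int.pow_dvd_pow_iff two_ne_zero, ← hdet]
    exact ⟨n' * m' * N, by ring⟩
  have hρ : ρ ^ 2 = n' * m' * N :=
    mul_left_cancel₀ (pow_ne_zero 2 (mul_ne_zero two_ne_zero hg.ne'))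
      (by linear_combination -hdet)
  obtain ⟨d, N', α, β, hd, rfl, hcop, rfl, rfl, rfl⟩ :=
    exists_eq_mul_sq_of_isCoprime_of_sq_eq hN hsf (nonneg_of_mul_nonneg_left hn hg)
      (nonneg_of_mul_nonneg_left hm hg) hn'm' hρ
  have ht : gcd3 (d * α ^ 2 * g) (2 * g * (d * α * (N' * β))) (N' * β ^ 2 * g) = g := by
    rw [show 2 * (g : ℤ) * (d * α * (N' * β)) = 2 * (d * α * (N' * β)) * g by ring]
    exact gcd3_mul_right_eq_of_isCoprime _ g hn'm'
  refine ⟨d, N', α, β, hd, rfl, hcop, ?_, ?_, ?_⟩ <;> rw [ht] <;> ring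

/-- `(1/√d)·[[a d, b N], [c, e d]]`; with determinant one these are the elements of `Γ°(N)V_d`. -/
noncomputable def atkinLehnerMatrix (N d a b c e : ℤ) : Matrix (Fin 2) (Fin 2) ℝ :=
  (Real.sqrt d)⁻¹ • !![((a * d : ℤ) : ℝ), ((b * N : ℤ) : ℝ); ((c : ℤ) : ℝ), ((e * d : ℤ) : ℝ)]

theorem det_inv_sqrt_smul {d : ℝ} (hd : 0 ≤ d) (M : Matrix (Fin 2) (Fin 2) ℝ) :
    ((Real.sqrt d)⁻¹ • M).det = d⁻¹ * M.det := by
  rw [Matrix.det_smul, Fintype.card_fin, inv_pow, Real.sq_sqrt hd]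

theorem inv_sqrt_smul_transpose_mul_mul {ι : Type*} [Fintype ι] {d : ℝ} (hd : 0 ≤ d)
    (M T : Matrix ι ι ℝ) :
    ((Real.sqrt d)⁻¹ • M)ᵀ * T * ((Real.sqrt d)⁻¹ • M) = d⁻¹ • (Mᵀ * T * M) := by
  rw [Matrix.transpose_smul, Matrix.smul_mul, Matrix.smul_mul, Matrix.mul_smul, smul_smul,
    ← mul_inv, Real.mul_self_sqrt hd]

theorem atkinLehnerMatrix_reduces {N n r m d N' α β u v : ℤ} {t : ℕ} (hd : 0 < d)
    (hN : N = d * N') (hn : n = t * d * α ^ 2) (hr : r = 2 * t * d * α * (N' * β))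
    (hm : m = t * N' * β ^ 2) (huv : u * (d * α) + v * (N' * β) = 1) :
    (atkinLehnerMatrix N d u (-β) v α).det = 1 ∧
      (atkinLehnerMatrix N d u (-β) v α)ᵀ *
          !![(n : ℝ), (r : ℝ) / 2; (r : ℝ) / 2, (m : ℝ) * (N : ℝ)] *
        atkinLehnerMatrix N d u (-β) v α = !![(t : ℝ), 0; 0, 0] := by
  set T : Matrix (Fin 2) (Fin 2) ℝ := !![(n : ℝ), (r : ℝ) / 2; (r : ℝ) / 2, (m : ℝ) * (N : ℝ)]
  subst hN hn hr hm
  have hd : (0 : ℝ) < d := by exact_mod_cast hd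
  have huv : (u : ℝ) * (d * α) + v * (N' * β) = 1 := by exact_mod_cast huv
  rw [atkinLehnerMatrix, det_inv_sqrt_smul hd.le, inv_sqrt_smul_transpose_mul_mul hd.le]
  set M : Matrix (Fin 2) (Fin 2) ℝ :=
    !![((u * d : ℤ) : ℝ), ((-β * (d * N') : ℤ) : ℝ); ((v : ℤ) : ℝ), ((α * d : ℤ) : ℝ)]
  have hdet : M.det = d := by
    rw [Matrix.det_fin_two_of]
    push_cast
    linear_combination (d : ℝ) * huv
  have hcongr : Mᵀ * T * M = (d : ℝ) • !![(t : ℝ), 0; 0, 0] := by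
    ext i j
    fin_cases i <;> fin_cases j <;>
      simp only [M, T, mul_apply, Matrix.smul_apply, transpose_apply, of_apply, cons_val',
        cons_val_zero, cons_val_one, cons_val_fin_one, Fin.sum_univ_two, smul_eq_mul] <;>
      push_cast
    · linear_combination (t * d * (u * (d * α) + v * (N' * β) + 1)) * huv
    all_goals ring
  rw [hdet, hcongr, inv_mul_cancel₀ hd.ne', smul_smul, inv_mul_cancel₀ hd.ne', one_smul]
  exact ⟨rfl, rfl⟩

/-- Lemma 3, matrix reduction: every nonzero singular positive semidefinite paramodular
matrix `T` can be brought to `diag(gcd(n,r,m), 0)` by some `U ∈ Γ°(N)V_d`, `d ∣ N`. -/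
theorem singular_matrix_reduction (N : ℤ) (hN : 1 ≤ N) (hsf : Squarefree N)
    (n r m : ℤ) (hn : 0 ≤ n) (hm : 0 ≤ m) (hne : ¬(n = 0 ∧ r = 0 ∧ m = 0))
    (hdet : 4 * n * m * N = r ^ 2) :
    ∃ d : ℤ, 0 < d ∧ d ∣ N ∧ ∃ a b c e : ℤ,
      (((Real.sqrt d)⁻¹ •
          !![((a * d : ℤ) : ℝ), ((b * N : ℤ) : ℝ); ((c : ℤ) : ℝ), ((e * d : ℤ) : ℝ)] :
        Matrix (Fin 2) (Fin 2) ℝ).det = 1) ∧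
      ((Real.sqrt d)⁻¹ •
          !![((a * d : ℤ) : ℝ), ((b * N : ℤ) : ℝ); ((c : ℤ) : ℝ), ((e * d : ℤ) : ℝ)])ᵀ *
        (!![(n : ℝ), (r : ℝ) / 2; (r : ℝ) / 2, (m : ℝ) * (N : ℝ)]) *
        ((Real.sqrt d)⁻¹ •
          !![((a * d : ℤ) : ℝ), ((b * N : ℤ) : ℝ); ((c : ℤ) : ℝ), ((e * d : ℤ) : ℝ)])
      = !![((gcd3 n r m : ℕ) : ℝ), 0; 0, 0] := by
  obtain ⟨d, N', α, β, hd, hdN, ⟨u, v, huv⟩, hn', hr', hm'⟩ :=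
    exists_rank_one_decomposition (by omega) hsf hn hm hne hdet
  exact ⟨d, hd, ⟨N', hdN⟩, u, -β, v, α, atkinLehnerMatrix_reduces hd hdN hn' hr' hm' huv⟩
end
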